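/- arXiv:2406.01849 — 3 statements merged into one kernel-verified Lean document; each statement's English description precedes it below -/
import Mathlib

section
/- Let P₁ and P₂ be Borel probability measures on ℝ. Suppose that every bounded closed interval [a,b] (a < b) with P₂([a,b]) > 0 also satisfies P₁([a,b]) > 0, and that for every such interval, (∫_{[a,b]} x dP₂(x))/P₂([a,b]) = (∫_{[a,b]} x dP₁(x))/P₁([a,b]). Then P₁([a,b]) > 0 if and only if P₂([a,b]) > 0 for every bounded interval [a,b] with a < b, and P₁ = P₂ as Borel measures. -/
/-!
Clearing denominators, equality of the conditional means on `I` reads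
`(∫_I x dP₁) P₂(I) = (∫_I x dP₂) P₁(I)`, a condition that survives monotone limits and so passes
from the closed intervals to the half-open ones. For adjacent blocks `A = (a, b]`, `C = (b, c]`
the mean of `P_i` on `A ∪ C` is the convex combination of its means on `A` and `C` with weights
`P_i(A)` and `P_i(C)`; as every mean on `A` is at most `b` and every mean on `C` exceeds `b`,
equal means on `A`, `C` and `A ∪ C` force `P₁(A) P₂(C) = P₂(A) P₁(C)`. Letting `a → -∞` and
`c → ∞` gives `F₁(b) (1 - F₂(b)) = F₂(b) (1 - F₁(b))` for the distribution functions,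
i.e. `F₁ = F₂`.
-/

open MeasureTheory Set Filter ProbabilityTheory Topology

/-- The conditional means of `P₁` and `P₂` on `s` agree, in the cross-multiplied form that is
also meaningful when `s` is null for one of the measures. -/
def SameMeanOn (P₁ P₂ : Measure ℝ) (s : Set ℝ) : Prop :=
  (∫ x in s, x ∂P₁) * P₂.real s = (∫ x in s, x ∂P₂) * P₁.real s

/-- `p_i, q_i` are the masses and `A_i, C_i` the first moments of two measures on adjacent blocks
`(a, b]` and `(b, c]`. -/
lemma mul_eq_mul_of_blocks {a b c p₁ p₂ q₁ q₂ A₁ A₂ C₁ C₂ : ℝ} (hab : a < b) (hbc : b < c)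
    (hA₁ : a * p₁ ≤ A₁ ∧ A₁ ≤ b * p₁) (hA₂ : a * p₂ ≤ A₂ ∧ A₂ ≤ b * p₂)
    (hC₁ : b * q₁ ≤ C₁ ∧ C₁ ≤ c * q₁) (hC₂ : b * q₂ ≤ C₂ ∧ C₂ ≤ c * q₂)
    (hC₁pos : 0 < q₁ → b * q₁ < C₁) (hC₂pos : 0 < q₂ → b * q₂ < C₂)
    (eA : A₁ * p₂ = A₂ * p₁) (eC : C₁ * q₂ = C₂ * q₁)
    (eAC : (A₁ + C₁) * (p₂ + q₂) = (A₂ + C₂) * (p₁ + q₁)) :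
    p₁ * q₂ = p₂ * q₁ := by
  have hp₁ : 0 ≤ p₁ := by nlinarith
  have hp₂ : 0 ≤ p₂ := by nlinarith
  have hq₁ : 0 ≤ q₁ := by nlinarith
  have hq₂ : 0 ≤ q₂ := by nlinarith
  have cross : A₁ * q₂ + C₁ * p₂ = A₂ * q₁ + C₂ * p₁ := by linear_combination eAC - eA - eC
  rcases hq₂.eq_or_lt with rfl | hq₂
  · obtain rfl : C₂ = 0 := by nlinarith
    rcases hp₂.eq_or_lt with rfl | hp₂
    · simp
    rcases hq₁.eq_or_lt with rfl | hq₁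
    · simp
    nlinarith [mul_pos (sub_pos.2 (hC₁pos hq₁)) hp₂, mul_nonneg (sub_nonneg.2 hA₂.2) hq₁.le]
  rcases hp₂.eq_or_lt with rfl | hp₂
  · obtain rfl : A₂ = 0 := by nlinarith
    rcases hp₁.eq_or_lt with rfl | hp₁
    · simp
    nlinarith [mul_pos (sub_pos.2 (hC₂pos hq₂)) hp₁, mul_nonneg (sub_nonneg.2 hA₁.2) hq₂.le]
  have key : (A₂ * q₂ - C₂ * p₂) * (p₁ * q₂ - p₂ * q₁) = 0 := by
    linear_combination p₂ * q₂ * cross - q₂ ^ 2 * eA - p₂ ^ 2 * eC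
  have hneg : A₂ * q₂ - C₂ * p₂ < 0 := by nlinarith [hC₂pos hq₂]
  linarith [(mul_eq_zero.1 key).resolve_left hneg.ne]

section Moments

variable (Q : Measure ℝ) [IsFiniteMeasure Q] (a b : ℝ)

lemma mul_measureReal_Ioc_le_setIntegral : a * Q.real (Ioc a b) ≤ ∫ x in Ioc a b, x ∂Q :=
  setIntegral_ge_of_const_le_real measurableSet_Ioc (measure_ne_top _ _) (fun _ hx => hx.1.le)
    continuous_id.integrableOn_Ioc

lemma setIntegral_Ioc_le_mul_measureReal : ∫ x in Ioc a b, x ∂Q ≤ b * Q.real (Ioc a b) := by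
  rw [mul_comm, ← smul_eq_mul, ← setIntegral_const]
  exact setIntegral_mono_on continuous_id.integrableOn_Ioc
    (integrableOn_const (measure_ne_top _ _)) measurableSet_Ioc fun _ hx => hx.2

variable {a b} in
lemma mul_measureReal_Ioc_lt_setIntegral (h : 0 < Q.real (Ioc a b)) :
    a * Q.real (Ioc a b) < ∫ x in Ioc a b, x ∂Q := by
  have hpos : 0 < ∫ x in Ioc a b, (x - a) ∂Q := by
    rw [setIntegral_pos_iff_support_of_nonneg_ae]
    · rw [(inter_eq_right (s := Function.support fun x => x - a)).2
        fun x hx => sub_ne_zero.2 hx.1.ne']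
      exact (ENNReal.toReal_pos_iff.1 h).1
    · exact (ae_restrict_iff' measurableSet_Ioc).2 (ae_of_all _ fun x hx => sub_nonneg.2 hx.1.le)
    · exact (continuous_id.sub continuous_const).integrableOn_Ioc
  rw [integral_sub (f := fun x => x) continuous_id.integrableOn_Ioc (integrable_const a),
    setIntegral_const, smul_eq_mul] at hpos
  linarith

end Moments

section SameMean

variable {P₁ P₂ : Measure ℝ} [IsFiniteMeasure P₁] [IsFiniteMeasure P₂]

lemma sameMeanOn_of_div_eq {s : Set ℝ} (hpos : 0 < P₂ s → 0 < P₁ s)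
    (heq : 0 < P₂ s → (∫ x in s, x ∂P₂) / (P₂ s).toReal = (∫ x in s, x ∂P₁) / (P₁ s).toReal) :
    SameMeanOn P₁ P₂ s := by
  rcases (zero_le : 0 ≤ P₂ s).eq_or_lt with h₂ | h₂
  · simp [SameMeanOn, measureReal_def, ← h₂, setIntegral_measure_zero _ h₂.symm]
  · have hw₁ : (P₁ s).toReal ≠ 0 := ENNReal.toReal_ne_zero.2 ⟨(hpos h₂).ne', measure_ne_top _ _⟩
    have hw₂ : (P₂ s).toReal ≠ 0 := ENNReal.toReal_ne_zero.2 ⟨h₂.ne', measure_ne_top _ _⟩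
    have := (div_eq_div_iff hw₂ hw₁).1 (heq h₂)
    simp only [SameMeanOn, measureReal_def]
    linarith

lemma SameMeanOn.iUnion_of_monotone {s : ℕ → Set ℝ} (hs : ∀ n, MeasurableSet (s n))
    (hmono : Monotone s) (h₁ : IntegrableOn (fun x => x) (⋃ n, s n) P₁)
    (h₂ : IntegrableOn (fun x => x) (⋃ n, s n) P₂) (h : ∀ n, SameMeanOn P₁ P₂ (s n)) :
    SameMeanOn P₁ P₂ (⋃ n, s n) := by
  have hreal (P : Measure ℝ) [IsFiniteMeasure P] :
      Tendsto (fun n => P.real (s n)) atTop (𝓝 (P.real (⋃ n, s n))) :=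
    (ENNReal.tendsto_toReal (measure_ne_top _ _)).comp (tendsto_measure_iUnion_atTop hmono)
  exact tendsto_nhds_unique_of_eventuallyEq
    ((tendsto_setIntegral_of_monotone hs hmono h₁).mul (hreal P₂))
    ((tendsto_setIntegral_of_monotone hs hmono h₂).mul (hreal P₁)) (Eventually.of_forall h)

lemma sameMeanOn_Ioc_of_Icc {b c : ℝ} (hbc : b < c)
    (h : ∀ t ∈ Ioo b c, SameMeanOn P₁ P₂ (Icc t c)) : SameMeanOn P₁ P₂ (Ioc b c) := by
  obtain ⟨u, hu_anti, hu_mem, hu_lim⟩ := exists_seq_strictAnti_tendsto' hbc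
  have hunion : ⋃ n, Icc (u n) c = Ioc b c := by
    rw [← Ioi_inter_Iic, ← iUnion_Ici_eq_Ioi_of_lt_of_tendsto (fun n => (hu_mem n).1) hu_lim,
      iUnion_inter]
    rfl
  have hint (P : Measure ℝ) [IsFiniteMeasure P] :
      IntegrableOn (fun x => x) (⋃ n, Icc (u n) c) P :=
    hunion ▸ continuous_id.integrableOn_Ioc
  rw [← hunion]
  exact .iUnion_of_monotone (fun _ => measurableSet_Icc)
    (fun m n hmn => Icc_subset_Icc_left (hu_anti.antitone hmn)) (hint P₁) (hint P₂)
    fun n => h _ (hu_mem n)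

lemma measureReal_Ioc_mul_eq_of_sameMeanOn {a b c : ℝ} (hab : a < b) (hbc : b < c)
    (hA : SameMeanOn P₁ P₂ (Ioc a b)) (hC : SameMeanOn P₁ P₂ (Ioc b c))
    (hAC : SameMeanOn P₁ P₂ (Ioc a c)) :
    P₁.real (Ioc a b) * P₂.real (Ioc b c) = P₂.real (Ioc a b) * P₁.real (Ioc b c) := by
  have hsplit (P : Measure ℝ) [IsFiniteMeasure P] :
      (∫ x in Ioc a c, x ∂P) = (∫ x in Ioc a b, x ∂P) + ∫ x in Ioc b c, x ∂P ∧
        P.real (Ioc a c) = P.real (Ioc a b) + P.real (Ioc b c) := by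
    rw [← Ioc_union_Ioc_eq_Ioc hab.le hbc.le]
    exact ⟨setIntegral_union (Ioc_disjoint_Ioc_of_le le_rfl) measurableSet_Ioc
      continuous_id.integrableOn_Ioc continuous_id.integrableOn_Ioc,
      measureReal_union (Ioc_disjoint_Ioc_of_le le_rfl) measurableSet_Ioc⟩
  have hbounds (P : Measure ℝ) [IsFiniteMeasure P] (s t : ℝ) :=
    And.intro (mul_measureReal_Ioc_le_setIntegral P s t) (setIntegral_Ioc_le_mul_measureReal P s t)
  rw [SameMeanOn, (hsplit P₁).1, (hsplit P₁).2, (hsplit P₂).1, (hsplit P₂).2] at hAC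
  exact mul_eq_mul_of_blocks hab hbc (hbounds P₁ a b) (hbounds P₂ a b) (hbounds P₁ b c)
    (hbounds P₂ b c) (mul_measureReal_Ioc_lt_setIntegral P₁) (mul_measureReal_Ioc_lt_setIntegral P₂)
    hA hC hAC

end SameMean

lemma measureReal_Ioc_eq_cdf_sub (Q : Measure ℝ) [IsProbabilityMeasure Q] {a b : ℝ} (hab : a ≤ b) :
    Q.real (Ioc a b) = cdf Q b - cdf Q a := by
  rw [measureReal_def, ← measure_cdf Q, StieltjesFunction.measure_Ioc,
    ENNReal.toReal_ofReal (sub_nonneg.2 ((cdf Q).mono hab)), measure_cdf]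

lemma eq_of_measureReal_Ioc_mul_eq (P₁ P₂ : Measure ℝ) [IsProbabilityMeasure P₁]
    [IsProbabilityMeasure P₂] (h : ∀ a b c : ℝ, a < b → b < c →
      P₁.real (Ioc a b) * P₂.real (Ioc b c) = P₂.real (Ioc a b) * P₁.real (Ioc b c)) :
    P₁ = P₂ := by
  refine Measure.eq_of_cdf P₁ P₂ (StieltjesFunction.ext fun b => ?_)
  have hlim (P Q : Measure ℝ) :
      Tendsto (fun p : ℝ × ℝ => (cdf P b - cdf P p.1) * (cdf Q p.2 - cdf Q b)) (atBot ×ˢ atTop)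
        (𝓝 ((cdf P b - 0) * (1 - cdf Q b))) :=
    (tendsto_const_nhds.sub ((tendsto_cdf_atBot P).comp tendsto_fst)).mul
      (((tendsto_cdf_atTop Q).comp tendsto_snd).sub tendsto_const_nhds)
  have hev : ∀ᶠ p : ℝ × ℝ in atBot ×ˢ atTop,
      (cdf P₁ b - cdf P₁ p.1) * (cdf P₂ p.2 - cdf P₂ b)
        = (cdf P₂ b - cdf P₂ p.1) * (cdf P₁ p.2 - cdf P₁ b) := by
    filter_upwards [(eventually_lt_atBot b).prod_mk (eventually_gt_atTop b)] with p hp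
    simp only [← measureReal_Ioc_eq_cdf_sub _ hp.1.le, ← measureReal_Ioc_eq_cdf_sub _ hp.2.le]
    exact h _ _ _ hp.1 hp.2
  linear_combination tendsto_nhds_unique_of_eventuallyEq (hlim P₁ P₂) (hlim P₂ P₁) hev

theorem stmt_2 (P₁ P₂ : Measure ℝ) [IsProbabilityMeasure P₁] [IsProbabilityMeasure P₂]
    (hpos : ∀ a b : ℝ, a < b → 0 < P₂ (Icc a b) → 0 < P₁ (Icc a b))
    (heq : ∀ a b : ℝ, a < b → 0 < P₂ (Icc a b) →
      (∫ x in Icc a b, x ∂P₂) / (P₂ (Icc a b)).toReal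
        = (∫ x in Icc a b, x ∂P₁) / (P₁ (Icc a b)).toReal) :
    (∀ a b : ℝ, a < b → (0 < P₁ (Icc a b) ↔ 0 < P₂ (Icc a b))) ∧ P₁ = P₂ := by
  have hIcc : ∀ a b : ℝ, a < b → SameMeanOn P₁ P₂ (Icc a b) := fun a b hab =>
    sameMeanOn_of_div_eq (hpos a b hab) (heq a b hab)
  have hIoc : ∀ a b : ℝ, a < b → SameMeanOn P₁ P₂ (Ioc a b) := fun a b hab =>
    sameMeanOn_Ioc_of_Icc hab fun t ht => hIcc t b ht.2
  have h : P₁ = P₂ := eq_of_measureReal_Ioc_mul_eq P₁ P₂ fun a b c hab hbc =>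
    measureReal_Ioc_mul_eq_of_sameMeanOn hab hbc (hIoc a b hab) (hIoc b c hbc)
      (hIoc a c (hab.trans hbc))
  exact ⟨fun a b _ => by rw [h], h⟩
end

section
/- Let X and Y be real-valued random variables with E|X| < ∞ and E|Y| < ∞. Then X and Y are stochastically independent if and only if for every t, s ∈ ℝ with ℙ(X ≥ t, Y ≥ s) > 0, setting U = {X ≥ t, Y ≥ s}, the product XY is integrable on U and E[XY | U] = E[X | U] · E[Y | U]. -/
open MeasureTheory Set

/-- Conditional expectation of `Z` given the event `U`: `E[Z·1_U] / ℙ(U)`. -/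
noncomputable def cexp {Ω : Type*} [MeasurableSpace Ω] (P : Measure Ω) (U : Set Ω)
    (Z : Ω → ℝ) : ℝ :=
  (∫ ω in U, Z ω ∂P) / (P U).toReal

/-! Write `Φ(t,s) = E[(X-t)⁺(Y-s)⁺]`, `A(t,s) = E[(X-t)⁺; Y ≥ s]` and `B(t,s) = E[(Y-s)⁺; X ≥ t]`.
The left partial derivatives of `Φ` are `-B` (in `t`) and `-A` (in `s`), and the left derivative of
`A` in `t` is `-F`, where `F(t,s) = ℙ(X ≥ t, Y ≥ s)`. Translated to these quantities, the hypothesis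
says `F Φ = A B`, so `A / Φ` has vanishing left derivative in `t` wherever `Φ > 0`; comparing the
growth of `A` and `Φ` as `t → -∞` pins the constant down: `A · E(Y-s)⁺ = ℙ(Y ≥ s) · Φ`. The same
argument in `s`, applied to `Φ / E(Y-s)⁺`, gives `Φ(t,s) = E(X-t)⁺ E(Y-s)⁺` where `Φ > 0`, and by
continuity everywhere. Differentiating this product formula once in each variable yields
`ℙ(X ≥ t, Y ≥ s) = ℙ(X ≥ t) ℙ(Y ≥ s)`, which determines the joint law. The converse is the product
rule for expectations of independent variables. -/

open ProbabilityTheory Filter Topology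

lemma hasDerivWithinAt_max_sub_Iic (z s : ℝ) :
    HasDerivWithinAt (fun u => max (z - u) 0) (-if s ≤ z then 1 else 0) (Iic s) s := by
  by_cases h : s ≤ z
  · rw [if_pos h]
    refine ((hasDerivAt_id s).const_sub z).hasDerivWithinAt.congr (fun u hu => ?_) ?_
    · exact max_eq_left (by simp only [mem_Iic] at hu; linarith)
    · exact max_eq_left (by simpa using h)
  · rw [if_neg h, neg_zero]
    refine ((hasDerivAt_const s 0).congr_of_eventuallyEq ?_).hasDerivWithinAt
    filter_upwards [Ioi_mem_nhds (not_le.mp h)] with u hu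
    exact max_eq_right (by simp only [mem_Ioi] at hu; linarith)

lemma constant_of_hasDerivWithinAt_Iic_zero {f : ℝ → ℝ} {a b : ℝ}
    (hcont : ContinuousOn f (Icc a b)) (hderiv : ∀ x ∈ Ioc a b, HasDerivWithinAt f 0 (Iic x) x) :
    ∀ x ∈ Icc a b, f x = f b := by
  intro x hx
  have hneg := constant_of_has_deriv_right_zero (f := f ∘ Neg.neg) (a := -b) (b := -a)
    (hcont.comp continuousOn_neg fun y hy => ⟨le_neg_of_le_neg hy.2, neg_le.1 hy.1⟩)
    (fun y hy => by
      simpa using (hderiv (-y) ⟨lt_neg_of_lt_neg hy.2, neg_le.1 hy.1⟩).comp y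
        (hasDerivWithinAt_neg y (Ici y)) fun z hz => neg_le_neg (mem_Ici.1 hz))
    (-x) ⟨neg_le_neg hx.2, neg_le_neg hx.1⟩
  simpa using hneg

lemma mul_eq_mul_of_wronskian_eq_zero {S : Set ℝ} (hS : IsLowerSet S) {f g f' g' : ℝ → ℝ}
    {a b : ℝ} (hf : ContinuousOn f S) (hg : ContinuousOn g S)
    (hf' : ∀ x ∈ S, HasDerivWithinAt f (f' x) (Iic x) x)
    (hg' : ∀ x ∈ S, HasDerivWithinAt g (g' x) (Iic x) x) (hg0 : ∀ x ∈ S, g x ≠ 0)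
    (hW : ∀ x ∈ S, f' x * g x = f x * g' x)
    (hfa : Tendsto (fun x => f x / -x) atBot (𝓝 a)) (hgb : Tendsto (fun x => g x / -x) atBot (𝓝 b))
    (hb : b ≠ 0) : ∀ x ∈ S, f x * b = a * g x := by
  intro x hx
  have hIic : ∀ y ≤ x, Icc y x ⊆ S := fun y _ z hz => hS hz.2 hx
  have hq_const : ∀ y ≤ x, f y / g y = f x / g x := by
    intro y hy
    refine constant_of_hasDerivWithinAt_Iic_zero ((hf.div hg hg0).mono (hIic y hy))
      (fun z hz => ?_) y ⟨le_rfl, hy⟩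
    have hzS := hIic y hy (Ioc_subset_Icc_self hz)
    simpa [hW z hzS] using (hf' z hzS).div (hg' z hzS) (hg0 z hzS)
  have hq_lim : Tendsto (fun y => f y / g y) atBot (𝓝 (a / b)) := by
    refine (hfa.div hgb hb).congr' ?_
    filter_upwards [Iio_mem_atBot 0] with y hy
    exact div_div_div_cancel_right₀ (neg_ne_zero.2 (ne_of_lt hy)) _ _
  have hq : f x / g x = a / b := by
    refine tendsto_nhds_unique (tendsto_const_nhds.congr' ?_) hq_lim
    filter_upwards [Iic_mem_atBot x] with y hy
    exact (hq_const y hy).symm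
  rwa [div_eq_div_iff (hg0 x hx) hb] at hq

lemma eq_of_eq_on_pos_of_antitone {g h : ℝ → ℝ} (hg : Continuous g) (hh : Continuous h)
    (hg_anti : Antitone g) (hh_anti : Antitone h) (hg0 : ∀ x, 0 ≤ g x) (hh0 : ∀ x, 0 ≤ h x)
    (heq : ∀ x, 0 < g x → g x = h x) (hpos : ∃ x, 0 < g x) (x : ℝ) : g x = h x := by
  rcases (hg0 x).lt_or_eq with hx | hx
  · exact heq x hx
  set K := {y | 0 < g y}
  have hK_le : ∀ y ∈ K, y ≤ x := fun y hy => not_lt.1 fun hxy =>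
    (lt_of_lt_of_le hy (hg_anti hxy.le)).ne' hx.symm
  have hK_bdd : BddAbove K := ⟨x, hK_le⟩
  set c := sSup K
  have hc_eq : g c = h c :=
    closure_minimal heq (isClosed_eq hg hh) (csSup_mem_closure hpos hK_bdd)
  have hc_zero : g c = 0 := by
    refine le_antisymm (not_lt.1 fun hc => ?_) (hg0 c)
    obtain ⟨y, hy, hcy⟩ := (((hg.tendsto c).eventually (lt_mem_nhds hc)).filter_mono
      nhdsWithin_le_nhds |>.and (self_mem_nhdsWithin (s := Ioi c))).exists
    exact (not_lt.2 (le_csSup hK_bdd hy)) hcy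
  rw [← hx]
  exact le_antisymm (hh0 x) ((hh_anti (csSup_le hpos hK_le)).trans (hc_eq ▸ hc_zero).le)

section ParametricIntegral

variable {Ω : Type*} [MeasurableSpace Ω] {μ : Measure Ω} {W Z : Ω → ℝ}

lemma hasDerivWithinAt_integral_mul_max_sub_Iic (hZ : Measurable Z) (hW : Integrable W μ)
    (hint : ∀ u, Integrable (fun ω => W ω * max (Z ω - u) 0) μ) (s : ℝ) :
    HasDerivWithinAt (fun u => ∫ ω, W ω * max (Z ω - u) 0 ∂μ)
      (-∫ ω in {ω | s ≤ Z ω}, W ω ∂μ) (Iic s) s := by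
  have hslope : ∀ u, slope (fun u => ∫ ω, W ω * max (Z ω - u) 0 ∂μ) s u
      = ∫ ω, W ω * slope (fun u => max (Z ω - u) 0) s u ∂μ := by
    intro u
    simp only [slope_def_field]
    rw [← integral_sub (hint u) (hint s), ← integral_div]
    congr 1 with ω
    ring
  rw [hasDerivWithinAt_iff_tendsto_slope, Iic_sdiff_right, funext hslope,
    ← integral_indicator (measurableSet_le measurable_const hZ), ← integral_neg]
  refine tendsto_integral_filter_of_dominated_convergence (fun ω => ‖W ω‖) ?_ ?_ hW.norm ?_
  · refine .of_forall fun u => hW.aestronglyMeasurable.mul ?_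
    simp only [slope_def_field]
    exact Measurable.aestronglyMeasurable (by fun_prop)
  · filter_upwards [self_mem_nhdsWithin] with u (hu : u < s)
    refine .of_forall fun ω => ?_
    rw [norm_mul]
    refine mul_le_of_le_one_right (norm_nonneg _) ?_
    rw [slope_def_field, Real.norm_eq_abs, abs_div, div_le_one (abs_pos.2 (sub_ne_zero.2 hu.ne))]
    simpa [abs_sub_comm] using abs_max_sub_max_le_abs (Z ω - u) (Z ω - s) 0
  · refine .of_forall fun ω => ?_
    have hderiv := hasDerivWithinAt_max_sub_Iic (Z ω) s
    rw [hasDerivWithinAt_iff_tendsto_slope, Iic_sdiff_right] at hderiv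
    convert hderiv.const_mul (W ω) using 2
    simp only [indicator_apply, mem_ofPred_eq]
    split_ifs <;> simp

lemma continuous_integral_mul_max_sub (hW : Integrable W μ)
    (hint : ∀ u, Integrable (fun ω => W ω * max (Z ω - u) 0) μ) :
    Continuous fun u => ∫ ω, W ω * max (Z ω - u) 0 ∂μ := by
  refine (LipschitzWith.of_dist_le' (K := ∫ ω, ‖W ω‖ ∂μ) fun a b => ?_).continuous
  rw [dist_eq_norm, ← integral_sub (hint a) (hint b), ← integral_mul_const]
  refine norm_integral_le_of_norm_le (hW.norm.mul_const _) (.of_forall fun ω => ?_)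
  rw [← mul_sub, norm_mul, Real.dist_eq]
  refine mul_le_mul_of_nonneg_left ?_ (norm_nonneg _)
  simpa [abs_sub_comm] using abs_max_sub_max_le_abs (Z ω - a) (Z ω - b) 0

lemma tendsto_integral_mul_max_sub_div_neg_atBot (hW : Integrable W μ)
    (hint : ∀ u, Integrable (fun ω => W ω * max (Z ω - u) 0) μ) :
    Tendsto (fun u => (∫ ω, W ω * max (Z ω - u) 0 ∂μ) / -u) atBot (𝓝 (∫ ω, W ω ∂μ)) := by
  have hint0 : Integrable (fun ω => W ω * max (Z ω) 0) μ := by simpa using hint 0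
  simp_rw [← integral_div]
  refine tendsto_integral_filter_of_dominated_convergence
    (fun ω => ‖W ω‖ + ‖W ω * max (Z ω) 0‖) (.of_forall fun u => ?_) ?_
    (hW.norm.add hint0.norm) (.of_forall fun ω => ?_)
  · exact ((hint u).div_const _).aestronglyMeasurable
  · filter_upwards [Iic_mem_atBot (-1)] with u (hu : u ≤ -1)
    refine .of_forall fun ω => ?_
    have hbound : max (Z ω - u) 0 / -u ≤ 1 + max (Z ω) 0 := by
      rw [div_le_iff₀ (by linarith)]
      have : max (Z ω - u) 0 ≤ max (Z ω) 0 + -u :=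
        max_le (by linarith [le_max_left (Z ω) 0]) (by linarith [le_max_right (Z ω) 0])
      nlinarith [le_max_right (Z ω) 0]
    rw [mul_div_assoc, norm_mul, norm_mul, ← mul_one_add, Real.norm_of_nonneg
      (div_nonneg (le_max_right _ _) (by linarith)), Real.norm_of_nonneg (le_max_right _ _)]
    exact mul_le_mul_of_nonneg_left hbound (norm_nonneg _)
  · have hlim : Tendsto (fun u : ℝ => W ω * (Z ω * (-u)⁻¹ + 1)) atBot
        (𝓝 (W ω * (Z ω * 0 + 1))) :=
      ((tendsto_inv_atTop_zero.comp tendsto_neg_atBot_atTop).const_mul (Z ω)).add_const 1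
        |>.const_mul (W ω)
    rw [mul_zero, zero_add, mul_one] at hlim
    refine hlim.congr' ?_
    filter_upwards [Iio_mem_atBot (min (Z ω) 0)] with u hu
    rw [mem_Iio, lt_min_iff] at hu
    rw [max_eq_left (by linarith), mul_div_assoc]
    field_simp [hu.2.ne]
    ring

lemma antitone_integral_mul_max_sub {W : Ω → ℝ} (hW : ∀ ω, 0 ≤ W ω)
    (hint : ∀ u, Integrable (fun ω => W ω * max (Z ω - u) 0) μ) :
    Antitone fun u => ∫ ω, W ω * max (Z ω - u) 0 ∂μ := fun a b hab =>
  integral_mono (hint b) (hint a) fun ω =>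
    mul_le_mul_of_nonneg_left (max_le_max (by linarith) le_rfl) (hW ω)

end ParametricIntegral

section StopLoss

variable {Ω : Type*} [MeasurableSpace Ω]

noncomputable def stopLoss (μ : Measure Ω) (Z : Ω → ℝ) (u : ℝ) : ℝ := ∫ ω, max (Z ω - u) 0 ∂μ

noncomputable def jointStopLoss (μ : Measure Ω) (X Y : Ω → ℝ) (t s : ℝ) : ℝ :=
  ∫ ω, max (X ω - t) 0 * max (Y ω - s) 0 ∂μ

variable {μ : Measure Ω} {X Y Z : Ω → ℝ}

lemma stopLoss_nonneg (u : ℝ) : 0 ≤ stopLoss μ Z u :=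
  integral_nonneg fun _ => le_max_right _ _

lemma jointStopLoss_comm (t s : ℝ) : jointStopLoss μ X Y t s = jointStopLoss μ Y X s t := by
  simp only [jointStopLoss, mul_comm]

lemma jointStopLoss_nonneg (t s : ℝ) : 0 ≤ jointStopLoss μ X Y t s :=
  integral_nonneg fun _ => mul_nonneg (le_max_right _ _) (le_max_right _ _)

variable [IsFiniteMeasure μ]

lemma integrable_max_sub (hZint : Integrable Z μ) (u : ℝ) :
    Integrable (fun ω => max (Z ω - u) 0) μ :=
  (hZint.sub (integrable_const u)).pos_part

lemma hasDerivWithinAt_stopLoss (hZ : Measurable Z) (hZint : Integrable Z μ) (s : ℝ) :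
    HasDerivWithinAt (stopLoss μ Z) (-μ.real {ω | s ≤ Z ω}) (Iic s) s := by
  unfold stopLoss
  simpa using hasDerivWithinAt_integral_mul_max_sub_Iic hZ (integrable_const 1)
    (fun u => by simpa using integrable_max_sub hZint u) s

lemma continuous_stopLoss (hZint : Integrable Z μ) : Continuous (stopLoss μ Z) := by
  unfold stopLoss
  simpa using continuous_integral_mul_max_sub (integrable_const 1)
    (fun u => by simpa using integrable_max_sub hZint u)

lemma antitone_stopLoss (hZint : Integrable Z μ) : Antitone (stopLoss μ Z) := by
  unfold stopLoss
  simpa using antitone_integral_mul_max_sub (fun _ => zero_le_one)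
    (fun u => by simpa using integrable_max_sub hZint u)

lemma tendsto_stopLoss_div_neg_atBot (hZint : Integrable Z μ) :
    Tendsto (fun u => stopLoss μ Z u / -u) atBot (𝓝 (μ.real univ)) := by
  unfold stopLoss
  simpa using tendsto_integral_mul_max_sub_div_neg_atBot (integrable_const 1)
    (fun u => by simpa using integrable_max_sub hZint u)

lemma pos_stopLoss_of_pos_jointStopLoss (hYint : Integrable Y μ) {t s : ℝ}
    (hpos : 0 < jointStopLoss μ X Y t s) : 0 < stopLoss μ Y s := by
  refine (stopLoss_nonneg s).lt_of_ne fun h0 => hpos.ne' (integral_eq_zero_of_ae ?_)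
  rw [eq_comm, stopLoss, integral_eq_zero_iff_of_nonneg (f := fun ω => max (Y ω - s) 0)
    (fun _ => le_max_right _ _) (integrable_max_sub hYint s)] at h0
  filter_upwards [h0] with ω hω
  simp [show max (Y ω - s) 0 = 0 from hω]

end StopLoss

section Quadrants

variable {Ω : Type*} {X Y Z : Ω → ℝ}

lemma max_sub_mul_max_sub_eq_indicator (t s : ℝ) :
    (fun ω => max (X ω - t) 0 * max (Y ω - s) 0)
      = {ω | t ≤ X ω ∧ s ≤ Y ω}.indicator fun ω => (X ω - t) * (Y ω - s) := by
  ext ω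
  by_cases hX : t ≤ X ω <;> by_cases hY : s ≤ Y ω <;>
    simp [indicator, hX, hY, le_of_lt, not_le.1]

lemma max_sub_eq_indicator (u : ℝ) :
    (fun ω => max (Z ω - u) 0) = {ω | u ≤ Z ω}.indicator fun ω => Z ω - u := by
  ext ω
  by_cases hZ : u ≤ Z ω <;> simp [indicator, hZ, le_of_lt, not_le.1]

lemma indicator_inter_preimage_mul {α β γ : Type*} {X : α → β} {Y : α → γ} {A : Set β}
    {B : Set γ} (f : β → ℝ) (g : γ → ℝ) :
    (X ⁻¹' A ∩ Y ⁻¹' B).indicator (fun ω => f (X ω) * g (Y ω))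
      = fun ω => A.indicator f (X ω) * B.indicator g (Y ω) := by
  ext ω
  by_cases hA : X ω ∈ A <;> by_cases hB : Y ω ∈ B <;> simp [indicator, hA, hB]

variable [MeasurableSpace Ω]

lemma measurableSet_quadrant (hX : Measurable X) (hY : Measurable Y) (t s : ℝ) :
    MeasurableSet {ω | t ≤ X ω ∧ s ≤ Y ω} :=
  (measurableSet_le measurable_const hX).inter (measurableSet_le measurable_const hY)

variable {μ : Measure Ω}

lemma jointStopLoss_eq_setIntegral (hX : Measurable X) (hY : Measurable Y) (t s : ℝ) :
    jointStopLoss μ X Y t s = ∫ ω in {ω | t ≤ X ω ∧ s ≤ Y ω}, (X ω - t) * (Y ω - s) ∂μ := by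
  rw [jointStopLoss, max_sub_mul_max_sub_eq_indicator,
    integral_indicator (measurableSet_quadrant hX hY t s)]

lemma stopLoss_restrict_eq_setIntegral (hZ : Measurable Z) (S : Set Ω) (u : ℝ) :
    stopLoss (μ.restrict S) Z u = ∫ ω in S ∩ {ω | u ≤ Z ω}, (Z ω - u) ∂μ := by
  rw [stopLoss, max_sub_eq_indicator, setIntegral_indicator (measurableSet_le measurable_const hZ)]

lemma measureReal_univ_mul_integral_sub_mul_sub [IsFiniteMeasure μ] (hX : Integrable X μ)
    (hY : Integrable Y μ) (hXY : Integrable (fun ω => X ω * Y ω) μ) (t s : ℝ) :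
    μ.real univ * ∫ ω, (X ω - t) * (Y ω - s) ∂μ - (∫ ω, (X ω - t) ∂μ) * ∫ ω, (Y ω - s) ∂μ
      = μ.real univ * (∫ ω, X ω * Y ω ∂μ) - (∫ ω, X ω ∂μ) * ∫ ω, Y ω ∂μ := by
  have hexpand : ∫ ω, (X ω - t) * (Y ω - s) ∂μ
      = ∫ ω, X ω * Y ω ∂μ - t * ∫ ω, Y ω ∂μ - s * ∫ ω, X ω ∂μ + μ.real univ * (t * s) := by
    have hpoly : (fun ω => (X ω - t) * (Y ω - s))
        = fun ω => X ω * Y ω - t * Y ω - s * X ω + t * s := by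
      ext ω; ring
    rw [hpoly, integral_add (f := fun ω => X ω * Y ω - t * Y ω - s * X ω)
        ((hXY.sub (hY.const_mul t)).sub (hX.const_mul s)) (integrable_const _),
      integral_sub (f := fun ω => X ω * Y ω - t * Y ω) (hXY.sub (hY.const_mul t)) (hX.const_mul s),
      integral_sub hXY (hY.const_mul t),
      integral_const_mul, integral_const_mul, integral_const, smul_eq_mul]
  rw [hexpand, integral_sub hX (integrable_const t), integral_sub hY (integrable_const s),
    integral_const, integral_const, smul_eq_mul, smul_eq_mul]
  ring

end Quadrants

section Uncorrelated

variable {Ω : Type*} [MeasurableSpace Ω] {P : Measure Ω} {X Y : Ω → ℝ}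

/-- `E[XY | U] = E[X | U] E[Y | U]` multiplied through by `ℙ(U)²`, so that null quadrants `U`
satisfy it trivially. -/
def UncorrelatedOnQuadrants (P : Measure Ω) (X Y : Ω → ℝ) : Prop :=
  ∀ t s : ℝ, IntegrableOn (fun ω => X ω * Y ω) {ω | t ≤ X ω ∧ s ≤ Y ω} P ∧
    P.real {ω | t ≤ X ω ∧ s ≤ Y ω} * ∫ ω in {ω | t ≤ X ω ∧ s ≤ Y ω}, X ω * Y ω ∂P =
      (∫ ω in {ω | t ≤ X ω ∧ s ≤ Y ω}, X ω ∂P) * ∫ ω in {ω | t ≤ X ω ∧ s ≤ Y ω}, Y ω ∂P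

lemma uncorrelatedOnQuadrants_iff [IsFiniteMeasure P] :
    UncorrelatedOnQuadrants P X Y ↔ ∀ t s : ℝ, 0 < P {ω | t ≤ X ω ∧ s ≤ Y ω} →
      IntegrableOn (fun ω => X ω * Y ω) {ω | t ≤ X ω ∧ s ≤ Y ω} P ∧
      cexp P {ω | t ≤ X ω ∧ s ≤ Y ω} (fun ω => X ω * Y ω)
        = cexp P {ω | t ≤ X ω ∧ s ≤ Y ω} X * cexp P {ω | t ≤ X ω ∧ s ≤ Y ω} Y := by
  refine forall₂_congr fun t s => ?_
  set U := {ω | t ≤ X ω ∧ s ≤ Y ω}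
  rcases (zero_le : 0 ≤ P U).eq_or_lt with h0 | hpos
  · have hU : P.restrict U = 0 := Measure.restrict_eq_zero.2 h0.symm
    simp [IntegrableOn, hU, ← h0]
  · have hp : P.real U ≠ 0 := (ENNReal.toReal_pos hpos.ne' (measure_ne_top _ _)).ne'
    simp only [hpos, true_implies, cexp, ← measureReal_def]
    refine and_congr_right fun _ => ?_
    rw [div_mul_div_comm, div_eq_div_iff hp (mul_ne_zero hp hp)]
    constructor <;> intro h
    · linear_combination P.real U * h
    · exact mul_left_cancel₀ hp (by linear_combination h)

lemma UncorrelatedOnQuadrants.symm (h : UncorrelatedOnQuadrants P X Y) :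
    UncorrelatedOnQuadrants P Y X := by
  intro t s
  have hU : {ω | t ≤ Y ω ∧ s ≤ X ω} = {ω | s ≤ X ω ∧ t ≤ Y ω} := by
    ext ω; exact and_comm
  simp only [hU, mul_comm (Y _)]
  exact ⟨(h s t).1, by linear_combination (h s t).2⟩

end Uncorrelated

namespace ProbabilityTheory

variable {Ω : Type*} [MeasurableSpace Ω] {P : Measure Ω} {X Y : Ω → ℝ}

lemma IndepFun.setIntegral_inter_preimage_mul (hXY : IndepFun X Y P)
    (hX : Measurable X) (hY : Measurable Y) {A B : Set ℝ} (hA : MeasurableSet A)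
    (hB : MeasurableSet B) {f g : ℝ → ℝ} (hf : Measurable f) (hg : Measurable g) :
    ∫ ω in X ⁻¹' A ∩ Y ⁻¹' B, f (X ω) * g (Y ω) ∂P
      = (∫ ω in X ⁻¹' A, f (X ω) ∂P) * ∫ ω in Y ⁻¹' B, g (Y ω) ∂P := by
  rw [← integral_indicator ((hX hA).inter (hY hB)), ← integral_indicator (hX hA),
    ← integral_indicator (hY hB), indicator_inter_preimage_mul]
  exact hXY.integral_fun_comp_mul_comp hX.aemeasurable hY.aemeasurable
    (hf.indicator hA).aestronglyMeasurable (hg.indicator hB).aestronglyMeasurable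

lemma IndepFun.integrableOn_inter_preimage_mul (hXY : IndepFun X Y P)
    (hX : Measurable X) (hY : Measurable Y) (hXint : Integrable X P) (hYint : Integrable Y P)
    {A B : Set ℝ} (hA : MeasurableSet A) (hB : MeasurableSet B) :
    IntegrableOn (fun ω => X ω * Y ω) (X ⁻¹' A ∩ Y ⁻¹' B) P := by
  rw [← integrable_indicator_iff ((hX hA).inter (hY hB))]
  change Integrable ((X ⁻¹' A ∩ Y ⁻¹' B).indicator fun ω => id (X ω) * id (Y ω)) P
  rw [indicator_inter_preimage_mul]
  exact (hXY.comp (measurable_id.indicator hA) (measurable_id.indicator hB)).integrable_mul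
    (hXint.indicator (hX hA)) (hYint.indicator (hY hB))

lemma IndepFun.uncorrelatedOnQuadrants (hXY : IndepFun X Y P)
    (hX : Measurable X) (hY : Measurable Y) (hXint : Integrable X P) (hYint : Integrable Y P) :
    UncorrelatedOnQuadrants P X Y := by
  intro t s
  have hU : {ω | t ≤ X ω ∧ s ≤ Y ω} = X ⁻¹' Ici t ∩ Y ⁻¹' Ici s := rfl
  have key {f g : ℝ → ℝ} (hf : Measurable f) (hg : Measurable g) :=
    hXY.setIntegral_inter_preimage_mul hX hY measurableSet_Ici measurableSet_Ici hf hg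
      (A := Ici t) (B := Ici s)
  have h11 := key (f := fun _ => 1) (g := fun _ => 1) measurable_const measurable_const
  have hX1 := key (g := fun _ => 1) measurable_id measurable_const
  have h1Y := key (f := fun _ => 1) measurable_const measurable_id
  have hXY' := key measurable_id measurable_id
  simp only [id, mul_one, one_mul, setIntegral_const, smul_eq_mul] at h11 hX1 h1Y hXY'
  rw [hU, h11, hX1, h1Y, hXY']
  exact ⟨hXY.integrableOn_inter_preimage_mul hX hY hXint hYint measurableSet_Ici
    measurableSet_Ici, by ring⟩

end ProbabilityTheory

lemma isCountablySpanning_range_Ici : IsCountablySpanning (range (Ici : ℝ → Set ℝ)) :=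
  ⟨fun n : ℕ => Ici (-n), fun _ => mem_range_self _, eq_univ_of_forall fun x =>
    mem_iUnion.2 ⟨⌈-x⌉₊, neg_le.1 (Nat.le_ceil (-x))⟩⟩

lemma MeasureTheory.Measure.ext_of_Ici_prod_Ici {μ ν : Measure (ℝ × ℝ)} [IsFiniteMeasure μ]
    (h : ∀ a b, μ (Ici a ×ˢ Ici b) = ν (Ici a ×ˢ Ici b)) (huniv : μ univ = ν univ) : μ = ν := by
  refine ext_of_generate_finite _ ?_ (isPiSystem_Ici.prod isPiSystem_Ici) ?_ huniv
  · rw [← generateFrom_prod_eq isCountablySpanning_range_Ici isCountablySpanning_range_Ici,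
      ← borel_eq_generateFrom_Ici]
  · rintro _ ⟨_, ⟨a, rfl⟩, _, ⟨b, rfl⟩, rfl⟩
    exact h a b

section Backward

variable {Ω : Type*} [MeasurableSpace Ω] {P : Measure Ω} {X Y : Ω → ℝ}

lemma UncorrelatedOnQuadrants.integrable_max_sub_mul_max_sub [IsFiniteMeasure P]
    (h : UncorrelatedOnQuadrants P X Y) (hX : Measurable X) (hY : Measurable Y)
    (hXint : Integrable X P) (hYint : Integrable Y P) (t s : ℝ) :
    Integrable (fun ω => max (X ω - t) 0 * max (Y ω - s) 0) P := by
  rw [max_sub_mul_max_sub_eq_indicator, integrable_indicator_iff (measurableSet_quadrant hX hY t s)]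
  have hexpand : (fun ω => (X ω - t) * (Y ω - s))
      = fun ω => X ω * Y ω - t * Y ω - s * X ω + t * s := by
    ext ω; ring
  rw [hexpand]
  exact (((h t s).1.sub (hYint.integrableOn.const_mul t)).sub
    (hXint.integrableOn.const_mul s)).add (integrable_const _).integrableOn

lemma UncorrelatedOnQuadrants.measureReal_mul_jointStopLoss [IsFiniteMeasure P]
    (h : UncorrelatedOnQuadrants P X Y) (hX : Measurable X) (hY : Measurable Y)
    (hXint : Integrable X P) (hYint : Integrable Y P) (t s : ℝ) :
    P.real {ω | t ≤ X ω ∧ s ≤ Y ω} * jointStopLoss P X Y t s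
      = stopLoss (P.restrict {ω | s ≤ Y ω}) X t * stopLoss (P.restrict {ω | t ≤ X ω}) Y s := by
  rw [jointStopLoss_eq_setIntegral hX hY, stopLoss_restrict_eq_setIntegral hX,
    stopLoss_restrict_eq_setIntegral hY, inter_comm, ← ofPred_and]
  have := measureReal_univ_mul_integral_sub_mul_sub hXint.restrict hYint.restrict (h t s).1 t s
  rw [measureReal_restrict_apply_univ, (h t s).2, sub_self] at this
  linarith

lemma UncorrelatedOnQuadrants.stopLoss_restrict_mul_stopLoss [IsFiniteMeasure P]
    (h : UncorrelatedOnQuadrants P X Y) (hX : Measurable X) (hY : Measurable Y)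
    (hXint : Integrable X P) (hYint : Integrable Y P) {t s : ℝ}
    (hpos : 0 < jointStopLoss P X Y t s) :
    stopLoss (P.restrict {ω | s ≤ Y ω}) X t * stopLoss P Y s
      = P.real {ω | s ≤ Y ω} * jointStopLoss P X Y t s := by
  have hYpos := pos_stopLoss_of_pos_jointStopLoss hYint hpos
  rw [jointStopLoss_comm] at hpos ⊢
  have hint := h.symm.integrable_max_sub_mul_max_sub hY hX hYint hXint s
  have hW := integrable_max_sub hYint s
  refine mul_eq_mul_of_wronskian_eq_zero (S := {u | 0 < jointStopLoss P Y X s u})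
    (g := jointStopLoss P Y X s) (f' := fun u => -P.real {ω | u ≤ X ω ∧ s ≤ Y ω})
    (g' := fun u => -stopLoss (P.restrict {ω | u ≤ X ω}) Y s)
    (fun a b hba ha => ha.trans_le
      (antitone_integral_mul_max_sub (fun _ => le_max_right _ _) hint hba))
    (continuous_stopLoss hXint.restrict).continuousOn
    (continuous_integral_mul_max_sub hW hint).continuousOn
    (fun u _ => ?_) (fun u _ => hasDerivWithinAt_integral_mul_max_sub_Iic hX hW hint u)
    (fun u hu => hu.ne') (fun u _ => ?_) ?_
    (tendsto_integral_mul_max_sub_div_neg_atBot hW hint)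
    hYpos.ne' t hpos
  · have := hasDerivWithinAt_stopLoss (μ := P.restrict {ω | s ≤ Y ω}) hX hXint.restrict u
    rwa [measureReal_restrict_apply (measurableSet_le measurable_const hX), ← ofPred_and] at this
  · rw [← jointStopLoss_comm]
    linear_combination -h.measureReal_mul_jointStopLoss hX hY hXint hYint u s
  · simpa using tendsto_stopLoss_div_neg_atBot (μ := P.restrict {ω | s ≤ Y ω}) hXint.restrict

lemma UncorrelatedOnQuadrants.jointStopLoss_eq_mul_of_pos [IsProbabilityMeasure P]
    (h : UncorrelatedOnQuadrants P X Y) (hX : Measurable X) (hY : Measurable Y)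
    (hXint : Integrable X P) (hYint : Integrable Y P) {t s : ℝ}
    (hpos : 0 < jointStopLoss P X Y t s) :
    jointStopLoss P X Y t s = stopLoss P X t * stopLoss P Y s := by
  have hint := h.integrable_max_sub_mul_max_sub hX hY hXint hYint t
  have hW := integrable_max_sub hXint t
  have key := mul_eq_mul_of_wronskian_eq_zero (S := {u | 0 < jointStopLoss P X Y t u})
    (f := jointStopLoss P X Y t) (g := stopLoss P Y) (a := stopLoss P X t)
    (f' := fun u => -stopLoss (P.restrict {ω | u ≤ Y ω}) X t)
    (g' := fun u => -P.real {ω | u ≤ Y ω})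
    (fun a b hba ha => ha.trans_le
      (antitone_integral_mul_max_sub (fun _ => le_max_right _ _) hint hba))
    (continuous_integral_mul_max_sub hW hint).continuousOn
    (continuous_stopLoss hYint).continuousOn
    (fun u _ => hasDerivWithinAt_integral_mul_max_sub_Iic hY hW hint u)
    (fun u _ => hasDerivWithinAt_stopLoss hY hYint u)
    (fun u hu => (pos_stopLoss_of_pos_jointStopLoss hYint hu).ne')
    (fun u hu => by
      linear_combination -h.stopLoss_restrict_mul_stopLoss hX hY hXint hYint hu)
    (tendsto_integral_mul_max_sub_div_neg_atBot hW hint)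
    (tendsto_stopLoss_div_neg_atBot hYint) (by simp)
  simpa using key s hpos

lemma UncorrelatedOnQuadrants.jointStopLoss_eq_mul [IsProbabilityMeasure P]
    (h : UncorrelatedOnQuadrants P X Y) (hX : Measurable X) (hY : Measurable Y)
    (hXint : Integrable X P) (hYint : Integrable Y P) (t s : ℝ) :
    jointStopLoss P X Y t s = stopLoss P X t * stopLoss P Y s := by
  have hint := h.symm.integrable_max_sub_mul_max_sub hY hX hYint hXint s
  have hW := integrable_max_sub hYint s
  rw [jointStopLoss_comm]
  by_cases hK : ∃ u, 0 < jointStopLoss P Y X s u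
  · refine eq_of_eq_on_pos_of_antitone (g := jointStopLoss P Y X s)
      (h := fun u => stopLoss P X u * stopLoss P Y s)
      (continuous_integral_mul_max_sub hW hint) ((continuous_stopLoss hXint).mul continuous_const)
      (antitone_integral_mul_max_sub (fun _ => le_max_right _ _) hint)
      ((antitone_stopLoss hXint).mul_const (stopLoss_nonneg s)) (jointStopLoss_nonneg s)
      (fun u => mul_nonneg (stopLoss_nonneg u) (stopLoss_nonneg s)) (fun u hu => ?_) hK t
    rw [← jointStopLoss_comm] at hu ⊢
    exact h.jointStopLoss_eq_mul_of_pos hX hY hXint hYint hu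
  · simp only [not_exists, not_lt] at hK
    have hzero : ∀ u, jointStopLoss P Y X s u = 0 := fun u =>
      le_antisymm (hK u) (jointStopLoss_nonneg s u)
    have hlim : Tendsto (fun u => jointStopLoss P Y X s u / -u) atBot (𝓝 (stopLoss P Y s)) :=
      tendsto_integral_mul_max_sub_div_neg_atBot hW hint
    have hY0 : stopLoss P Y s = 0 :=
      tendsto_nhds_unique hlim (tendsto_const_nhds.congr fun u => by rw [hzero, zero_div])
    rw [hzero, hY0, mul_zero]

lemma UncorrelatedOnQuadrants.stopLoss_restrict_eq_mul [IsProbabilityMeasure P]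
    (h : UncorrelatedOnQuadrants P X Y) (hX : Measurable X) (hY : Measurable Y)
    (hXint : Integrable X P) (hYint : Integrable Y P) (t s : ℝ) :
    stopLoss (P.restrict {ω | t ≤ X ω}) Y s = P.real {ω | t ≤ X ω} * stopLoss P Y s := by
  have hΦ : jointStopLoss P Y X s = fun u => stopLoss P X u * stopLoss P Y s :=
    funext fun u => by rw [← jointStopLoss_comm, h.jointStopLoss_eq_mul hX hY hXint hYint]
  have hderiv : HasDerivWithinAt (jointStopLoss P Y X s)
      (-stopLoss (P.restrict {ω | t ≤ X ω}) Y s) (Iic t) t :=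
    hasDerivWithinAt_integral_mul_max_sub_Iic hX (integrable_max_sub hYint s)
      (h.symm.integrable_max_sub_mul_max_sub hY hX hYint hXint s) t
  rw [hΦ] at hderiv
  have := (uniqueDiffWithinAt_Iic t).eq_deriv _ hderiv
    ((hasDerivWithinAt_stopLoss hX hXint t).mul_const (stopLoss P Y s))
  exact neg_inj.1 (this.trans (neg_mul _ _))

lemma UncorrelatedOnQuadrants.measureReal_eq_mul [IsProbabilityMeasure P]
    (h : UncorrelatedOnQuadrants P X Y) (hX : Measurable X) (hY : Measurable Y)
    (hXint : Integrable X P) (hYint : Integrable Y P) (t s : ℝ) :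
    P.real {ω | t ≤ X ω ∧ s ≤ Y ω} = P.real {ω | t ≤ X ω} * P.real {ω | s ≤ Y ω} := by
  have hderiv := hasDerivWithinAt_stopLoss (μ := P.restrict {ω | t ≤ X ω}) hY hYint.restrict s
  rw [funext (h.stopLoss_restrict_eq_mul hX hY hXint hYint t),
    measureReal_restrict_apply (measurableSet_le measurable_const hY), inter_comm,
    ← ofPred_and] at hderiv
  have := (uniqueDiffWithinAt_Iic s).eq_deriv _ hderiv
    ((hasDerivWithinAt_stopLoss hY hYint s).const_mul (P.real {ω | t ≤ X ω}))
  linarith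

lemma UncorrelatedOnQuadrants.map_prod_eq [IsProbabilityMeasure P]
    (h : UncorrelatedOnQuadrants P X Y) (hX : Measurable X) (hY : Measurable Y)
    (hXint : Integrable X P) (hYint : Integrable Y P) :
    Measure.map (fun ω => (X ω, Y ω)) P = (Measure.map X P).prod (Measure.map Y P) := by
  refine Measure.ext_of_Ici_prod_Ici (fun a b => ?_) ?_
  · rw [Measure.map_apply (hX.prodMk hY) (measurableSet_Ici.prod measurableSet_Ici),
      Measure.prod_prod, Measure.map_apply hX measurableSet_Ici,
      Measure.map_apply hY measurableSet_Ici,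
      ← ENNReal.toReal_eq_toReal_iff' (measure_ne_top _ _) (by finiteness), ENNReal.toReal_mul]
    exact h.measureReal_eq_mul hX hY hXint hYint a b
  · have := Measure.isProbabilityMeasure_map (μ := P) (hX.prodMk hY).aemeasurable
    have := Measure.isProbabilityMeasure_map (μ := P) hX.aemeasurable
    have := Measure.isProbabilityMeasure_map (μ := P) hY.aemeasurable
    simp

end Backward

theorem stmt_6 {Ω : Type*} [MeasurableSpace Ω] (P : Measure Ω) [IsProbabilityMeasure P]
    (X Y : Ω → ℝ) (hX : Measurable X) (hY : Measurable Y)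
    (hXint : Integrable X P) (hYint : Integrable Y P) :
    Measure.map (fun ω => (X ω, Y ω)) P = (Measure.map X P).prod (Measure.map Y P) ↔
    ∀ t s : ℝ, 0 < P {ω | t ≤ X ω ∧ s ≤ Y ω} →
      IntegrableOn (fun ω => X ω * Y ω) {ω | t ≤ X ω ∧ s ≤ Y ω} P ∧
      cexp P {ω | t ≤ X ω ∧ s ≤ Y ω} (fun ω => X ω * Y ω)
        = cexp P {ω | t ≤ X ω ∧ s ≤ Y ω} X * cexp P {ω | t ≤ X ω ∧ s ≤ Y ω} Y := by
  rw [← uncorrelatedOnQuadrants_iff]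
  constructor
  · intro hmap
    exact ((indepFun_iff_map_prod_eq_prod_map_map hX.aemeasurable hY.aemeasurable).2
      hmap).uncorrelatedOnQuadrants hX hY hXint hYint
  · intro h
    exact h.map_prod_eq hX hY hXint hYint
end

section
/- Let X and Y be real-valued random variables such that the topological supports supp(ℙ_X) and supp(ℙ_Y) are intervals (order-connected sets, bounded or unbounded), and such that supp(ℙ_{(X,Y)}) = supp(ℙ_X) × supp(ℙ_Y). Then X and Y are stochastically independent if and only if there exists ε > 0 such that for every rectangle [a,b] × [c,d] with max(b−a, d−c) ≤ ε and ℙ(X ∈ [a,b], Y ∈ [c,d]) > 0, setting U = {X ∈ [a,b], Y ∈ [c,d]}, one has E[XY | U] = E[X | U] · E[Y | U]. -/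
open MeasureTheory Set

/-- The topological support of a Borel measure: the points all of whose neighbourhoods
have positive measure.  (It is the smallest closed set of full measure.) -/
def msupport {α : Type*} [TopologicalSpace α] [MeasurableSpace α] (P : Measure α) : Set α :=
  {x | ∀ U ∈ nhds x, 0 < P U}


/-!
Push everything forward to the joint law `μ` of `(X, Y)` on `ℝ²`. Independence gives local
uncorrelatedness by Fubini. Conversely, work with small half-open rectangles whose edges avoid
the countably many atoms of the marginals. If such a rectangle is cut by a horizontal line
`y = s`, zero covariance on the rectangle and on both halves forces
`(E₁X - E₂X) (E₁Y - E₂Y) = 0`; since `E₁Y < s ≤ E₂Y`, both halves have the same mean of `X`.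
Applied to a `2 × 2` grid of cells, this shows that the cell masses satisfy
`μ₁₁ μ₂₂ = μ₁₂ μ₂₁`. As the supports are intervals and the joint support is their product,
every small rectangle meeting the supports has positive mass, so this local identity propagates
along chains of overlapping intervals to `μ (I × J) μ (I' × J') = μ (I × J') μ (I' × J)` for all
small intervals. A π-system argument turns this into `μ = μ_X ⊗ μ_Y`.
-/

theorem Set.OrdConnected.apply_eq_apply_of_le_add {β : Type*} {J : Set ℝ} (hJ : J.OrdConnected)
    {δ : ℝ} (hδ : 0 < δ) {f : ℝ → β}
    (hf : ∀ x ∈ J, ∀ y ∈ J, x ≤ y → y ≤ x + δ → f x = f y) {x y : ℝ} (hx : x ∈ J) (hy : y ∈ J) :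
    f x = f y := by
  wlog hxy : x ≤ y generalizing x y
  · exact (this hy hx (le_of_not_ge hxy)).symm
  have key : ∀ n : ℕ, ∀ x ∈ J, x ≤ y → y ≤ x + n * δ → f x = f y := by
    intro n
    induction n with
    | zero =>
      intro x _ hxy h
      rw [le_antisymm hxy (by simpa using h)]
    | succ n ih =>
      intro x hx hxy h
      by_cases hnear : y ≤ x + δ
      · exact hf x hx y hy hxy hnear
      have hz : x + δ ∈ J := hJ.out hx hy ⟨by linarith, by linarith⟩
      rw [hf x hx _ hz (by linarith) le_rfl]
      exact ih _ hz (by linarith) (by push_cast at h; linarith)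
  obtain ⟨n, hn⟩ := exists_nat_ge ((y - x) / δ)
  exact key n x hx hxy (by rw [div_le_iff₀ hδ] at hn; linarith)

def IntervalHereditary (J D : Set ℝ) (ε : ℝ) (ρ : ℝ → ℝ → ℝ) : Prop :=
  ∀ p ∈ D, ∀ q ∈ D, ∀ r ∈ D, p ≤ q → q ≤ r → r - p ≤ ε →
    ((Ioo p q ∩ J).Nonempty → ρ p r = ρ p q) ∧ ((Ioo q r ∩ J).Nonempty → ρ p r = ρ q r)

namespace IntervalHereditary

variable {J D : Set ℝ} {ε : ℝ} {ρ : ℝ → ℝ → ℝ}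

theorem eq_of_subset (h : IntervalHereditary J D ε ρ) {a b p q : ℝ} (ha : a ∈ D) (hb : b ∈ D)
    (hp : p ∈ D) (hq : q ∈ D) (hap : a ≤ p) (hqb : q ≤ b) (hab : b - a ≤ ε)
    (hpq : (Ioo p q ∩ J).Nonempty) : ρ a b = ρ p q := by
  have hpq_le : p ≤ q := (nonempty_Ioo.1 (hpq.mono inter_subset_left)).le
  rw [(h a ha q hq b hb (hap.trans hpq_le) hqb hab).1
      (hpq.mono (inter_subset_inter_left _ (Ioo_subset_Ioo_left hap))),
    (h a ha p hp q hq hap hpq_le (by linarith)).2 hpq]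

theorem eq_of_mem_Ioo (h : IntervalHereditary J D ε ρ) {ι a b a' b' : ℝ} (hι : ι ∈ J)
    (ha : a ∈ D) (hb : b ∈ D) (ha' : a' ∈ D) (hb' : b' ∈ D) (hab : b - a ≤ ε)
    (hab' : b' - a' ≤ ε) (hιab : ι ∈ Ioo a b) (hιab' : ι ∈ Ioo a' b') : ρ a b = ρ a' b' := by
  have hmax : max a a' ∈ D := by rcases max_choice a a' with h | h <;> rw [h] <;> assumption
  have hmin : min b b' ∈ D := by rcases min_choice b b' with h | h <;> rw [h] <;> assumption
  have hmeet : (Ioo (max a a') (min b b') ∩ J).Nonempty :=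
    ⟨ι, ⟨max_lt hιab.1 hιab'.1, lt_min hιab.2 hιab'.2⟩, hι⟩
  rw [h.eq_of_subset ha hb hmax hmin (le_max_left _ _) (min_le_left _ _) hab hmeet,
    h.eq_of_subset ha' hb' hmax hmin (le_max_right _ _) (min_le_right _ _) hab' hmeet]

theorem eq (h : IntervalHereditary J D ε ρ) (hJ : J.OrdConnected) (hD : Dense D) (hε : 0 < ε)
    {p q p' q' : ℝ} (hp : p ∈ D) (hq : q ∈ D) (hp' : p' ∈ D) (hq' : q' ∈ D)
    (hpq : q - p ≤ ε) (hpq' : q' - p' ≤ ε)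
    (hI : (Ioo p q ∩ J).Nonempty) (hI' : (Ioo p' q' ∩ J).Nonempty) :
    ρ p q = ρ p' q' := by
  choose l hlD hl using fun ι => hD.exists_between (show ι - ε / 4 < ι by linarith)
  choose u huD hu using fun ι => hD.exists_between (show ι < ι + ε / 4 by linarith)
  have hloc : ∀ x ∈ J, ∀ y ∈ J, x ≤ y → y ≤ x + ε / 4 → ρ (l x) (u x) = ρ (l y) (u y) := by
    intro x hx y hy hxy hyx
    have h1 := hl x; have h2 := hu x; have h3 := hl y; have h4 := hu y
    rw [h.eq_of_mem_Ioo hx (hlD x) (huD x) (hlD x) (huD y) (by linarith [h1.1, h2.2])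
        (by linarith [h1.1, h4.2]) ⟨h1.2, h2.1⟩ ⟨h1.2, by linarith [h4.1]⟩,
      h.eq_of_mem_Ioo hy (hlD x) (huD y) (hlD y) (huD y) (by linarith [h1.1, h4.2])
        (by linarith [h3.1, h4.2]) ⟨by linarith [h1.2], h4.1⟩ ⟨h3.2, h4.1⟩]
  obtain ⟨ι, hιpq, hιJ⟩ := hI
  obtain ⟨ι', hιpq', hιJ'⟩ := hI'
  rw [h.eq_of_mem_Ioo hιJ hp hq (hlD ι) (huD ι) hpq (by linarith [(hl ι).1, (hu ι).2]) hιpq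
      ⟨(hl ι).2, (hu ι).1⟩, hJ.apply_eq_apply_of_le_add (by positivity) hloc hιJ hιJ',
    h.eq_of_mem_Ioo hιJ' (hlD ι') (huD ι') hp' hq' (by linarith [(hl ι').1, (hu ι').2]) hpq'
      ⟨(hl ι').2, (hu ι').1⟩ hιpq']

end IntervalHereditary

theorem add_div_add_eq_div_left {a b c d : ℝ} (hb : b ≠ 0) (hbd : b + d ≠ 0)
    (h : a * d = c * b) : (a + c) / (b + d) = a / b := by
  rw [div_eq_div_iff hbd hb]
  linear_combination -h

theorem mul_eq_mul_of_link {J D : Set ℝ} (hJ : J.OrdConnected) (hD : Dense D) {ε : ℝ}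
    (hε : 0 < ε) {F G : ℝ → ℝ → ℝ}
    (hF : ∀ p q r, p ≤ q → q ≤ r → F p r = F p q + F q r)
    (hG : ∀ p q r, p ≤ q → q ≤ r → G p r = G p q + G q r)
    (hG_pos : ∀ p q, (Ioo p q ∩ J).Nonempty → 0 < G p q)
    (h_null : ∀ p ∈ D, ∀ q, Ioo p q ∩ J = ∅ → F p q = 0 ∧ G p q = 0)
    (h_link : ∀ p ∈ D, ∀ q ∈ D, ∀ r ∈ D, r - p ≤ ε → (Ioo p q ∩ J).Nonempty →
      (Ioo q r ∩ J).Nonempty → F p q * G q r = F q r * G p q)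
    {p q p' q' : ℝ} (hp : p ∈ D) (hq : q ∈ D) (hp' : p' ∈ D) (hq' : q' ∈ D)
    (hpq : q - p ≤ ε) (hpq' : q' - p' ≤ ε)
    (hI : (Ioo p q ∩ J).Nonempty) (hI' : (Ioo p' q' ∩ J).Nonempty) :
    F p q * G p' q' = F p' q' * G p q := by
  -- the ratio `F / G` on a union of two adjacent pieces is a mediant of its values on the pieces
  have hered : IntervalHereditary J D ε fun p q => F p q / G p q := by
    intro p hp q hq r hr hpq hqr hpr
    simp only [hF p q r hpq hqr, hG p q r hpq hqr]
    constructor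
    · intro hpq'
      have hGpq := hG_pos p q hpq'
      by_cases hqr' : (Ioo q r ∩ J).Nonempty
      · exact add_div_add_eq_div_left hGpq.ne'
          (hGpq.trans (lt_add_of_pos_right _ (hG_pos q r hqr'))).ne'
          (h_link p hp q hq r hr hpr hpq' hqr')
      · obtain ⟨hF0, hG0⟩ := h_null q hq r (not_nonempty_iff_eq_empty.mp hqr')
        rw [hF0, hG0, add_zero, add_zero]
    · intro hqr'
      have hGqr := hG_pos q r hqr'
      rw [add_comm (F p q), add_comm (G p q)]
      by_cases hpq' : (Ioo p q ∩ J).Nonempty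
      · exact add_div_add_eq_div_left hGqr.ne'
          (hGqr.trans (lt_add_of_pos_right _ (hG_pos p q hpq'))).ne'
          (h_link p hp q hq r hr hpr hpq' hqr').symm
      · obtain ⟨hF0, hG0⟩ := h_null p hp q (not_nonempty_iff_eq_empty.mp hpq')
        rw [hF0, hG0, add_zero, add_zero]
  have h := hered.eq hJ hD hε hp hq hp' hq' hpq hpq' hI hI'
  rwa [div_eq_div_iff (hG_pos p q hI).ne' (hG_pos p' q' hI').ne'] at h

theorem msupport_eq_support {α : Type*} [TopologicalSpace α] [MeasurableSpace α]
    (μ : Measure α) : msupport μ = μ.support := by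
  ext x
  exact (Measure.mem_support_iff_forall x).symm

section Uncorrelated

variable {Ω : Type*} [MeasurableSpace Ω] {μ : Measure Ω}

-- `Cov(f, g) = 0` on `R`, with the denominators `μ R` of the conditional means cleared.
def UncorrelatedOn (μ : Measure Ω) (f g : Ω → ℝ) (R : Set Ω) : Prop :=
  μ.real R * ∫ x in R, f x * g x ∂μ = (∫ x in R, f x ∂μ) * ∫ x in R, g x ∂μ

theorem uncorrelatedOn_iff_cexp {R : Set Ω} (h₀ : μ R ≠ 0) (h_top : μ R ≠ ⊤) {f g : Ω → ℝ} :
    UncorrelatedOn μ f g R ↔ cexp μ R (fun x => f x * g x) = cexp μ R f * cexp μ R g := by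
  have hm : μ.real R ≠ 0 := (ENNReal.toReal_pos h₀ h_top).ne'
  rw [UncorrelatedOn, cexp, cexp, cexp, ← measureReal_def]
  field_simp

theorem cexp_congr_set {R R' : Set Ω} (h : R =ᵐ[μ] R') (f : Ω → ℝ) :
    cexp μ R f = cexp μ R' f := by
  rw [cexp, cexp, setIntegral_congr_set h, measure_congr h]

theorem cexp_map {Ω' : Type*} [MeasurableSpace Ω'] {φ : Ω → Ω'} (hφ : Measurable φ)
    {R : Set Ω'} (hR : MeasurableSet R) {f : Ω' → ℝ} (hf : Measurable f) :
    cexp (μ.map φ) R f = cexp μ (φ ⁻¹' R) (f ∘ φ) := by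
  rw [cexp, cexp, Measure.map_apply hφ hR,
    setIntegral_map hR hf.aestronglyMeasurable hφ.aemeasurable]
  rfl

theorem cexp_prod_mul {α β : Type*} [MeasurableSpace α] [MeasurableSpace β] {ν₁ : Measure α}
    {ν₂ : Measure β} [IsFiniteMeasure ν₁] [IsFiniteMeasure ν₂] {s : Set α} {t : Set β}
    (h : ν₁.prod ν₂ (s ×ˢ t) ≠ 0) (f : α → ℝ) (g : β → ℝ) :
    cexp (ν₁.prod ν₂) (s ×ˢ t) (fun z => f z.1 * g z.2)
      = cexp (ν₁.prod ν₂) (s ×ˢ t) (fun z => f z.1)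
        * cexp (ν₁.prod ν₂) (s ×ˢ t) (fun z => g z.2) := by
  have hf := setIntegral_prod_mul (μ := ν₁) (ν := ν₂) f (fun _ => (1 : ℝ)) s t
  have hg := setIntegral_prod_mul (μ := ν₁) (ν := ν₂) (fun _ => (1 : ℝ)) g s t
  simp only [mul_one, one_mul, setIntegral_const, smul_eq_mul] at hf hg
  rw [Measure.prod_prod, mul_ne_zero_iff] at h
  have hs : ν₁.real s ≠ 0 := (ENNReal.toReal_pos h.1 (measure_ne_top _ _)).ne'
  have ht : ν₂.real t ≠ 0 := (ENNReal.toReal_pos h.2 (measure_ne_top _ _)).ne'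
  simp only [cexp, setIntegral_prod_mul, hf, hg, ← measureReal_def, measureReal_prod_prod]
  field_simp

theorem setIntegral_lt_mul_measureReal {R : Set Ω} (hR : MeasurableSet R) (h_top : μ R ≠ ⊤)
    (hpos : 0 < μ R) {f : Ω → ℝ} (hf : IntegrableOn f R μ) {c : ℝ} (hfc : ∀ x ∈ R, f x < c) :
    ∫ x in R, f x ∂μ < c * μ.real R := by
  have hc : IntegrableOn (fun _ => c) R μ := integrableOn_const h_top
  have h : 0 < ∫ x in R, (c - f x) ∂μ := by
    rw [integral_pos_iff_support_of_nonneg_ae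
      ((ae_restrict_mem hR).mono fun x hx => (sub_pos.2 (hfc x hx)).le) (hc.sub hf),
      Measure.restrict_apply_superset (t := Function.support fun x => c - f x)
        fun x hx => (sub_pos.2 (hfc x hx)).ne']
    exact hpos
  rw [integral_sub hc hf, setIntegral_const, smul_eq_mul] at h
  linarith

theorem integral_mul_measureReal_eq_of_uncorrelatedOn [IsFiniteMeasure μ] {f g : Ω → ℝ}
    {R₁ R₂ : Set Ω} (hR₁ : MeasurableSet R₁) (hR₂ : MeasurableSet R₂) (hd : Disjoint R₁ R₂)
    (hf : IntegrableOn f (R₁ ∪ R₂) μ) (hg : IntegrableOn g (R₁ ∪ R₂) μ)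
    (hfg : IntegrableOn (fun x => f x * g x) (R₁ ∪ R₂) μ) (h₁ : 0 < μ R₁) (h₂ : 0 < μ R₂)
    {c : ℝ} (hg₁ : ∀ x ∈ R₁, g x < c) (hg₂ : ∀ x ∈ R₂, c ≤ g x)
    (hU₁ : UncorrelatedOn μ f g R₁) (hU₂ : UncorrelatedOn μ f g R₂)
    (hU : UncorrelatedOn μ f g (R₁ ∪ R₂)) :
    (∫ x in R₁, f x ∂μ) * μ.real R₂ = (∫ x in R₂, f x ∂μ) * μ.real R₁ := by
  rw [UncorrelatedOn, measureReal_union hd hR₂,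
    setIntegral_union hd hR₂ hf.left_of_union hf.right_of_union,
    setIntegral_union hd hR₂ hg.left_of_union hg.right_of_union,
    setIntegral_union hd hR₂ hfg.left_of_union hfg.right_of_union] at hU
  rw [UncorrelatedOn] at hU₁ hU₂
  have hT₁ := setIntegral_lt_mul_measureReal hR₁ (measure_ne_top μ _) h₁ hg.left_of_union hg₁
  have hT₂ := setIntegral_ge_of_const_le_real hR₂ (measure_ne_top μ _) hg₂ hg.right_of_union
  have hm₁ : 0 < μ.real R₁ := ENNReal.toReal_pos h₁.ne' (measure_ne_top μ _)
  have hm₂ : 0 < μ.real R₂ := ENNReal.toReal_pos h₂.ne' (measure_ne_top μ _)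
  set m₁ := μ.real R₁
  set m₂ := μ.real R₂
  set S₁ := ∫ x in R₁, f x ∂μ
  set S₂ := ∫ x in R₂, f x ∂μ
  set T₁ := ∫ x in R₁, g x ∂μ
  set T₂ := ∫ x in R₂, g x ∂μ
  -- the covariance on `R₁ ∪ R₂` exceeds the mixture of the covariances on `R₁` and `R₂` by
  -- `w₁ w₂ (E₁ f - E₂ f) (E₁ g - E₂ g)`, and `c` separates `E₁ g < E₂ g`
  have hsplit : (S₁ * m₂ - S₂ * m₁) * (T₁ * m₂ - T₂ * m₁) = 0 := by
    linear_combination (-(m₁ * m₂ + m₂ ^ 2)) * hU₁ + (-(m₁ * m₂ + m₁ ^ 2)) * hU₂ + m₁ * m₂ * hU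
  have hT : T₁ * m₂ - T₂ * m₁ < 0 := by nlinarith
  linarith [(mul_eq_zero.1 hsplit).resolve_right hT.ne]

end Uncorrelated

section SmallIntervals

variable {D : Set ℝ} {ε : ℝ}

def smallIco (D : Set ℝ) (ε : ℝ) : Set (Set ℝ) :=
  {s | ∃ a ∈ D, ∃ b ∈ D, a < b ∧ b - a ≤ ε ∧ Ico a b = s}

theorem Ico_inter_Ico_mem_smallIco {a b a' b' : ℝ} (ha : a ∈ D) (hb : b ∈ D) (ha' : a' ∈ D)
    (hb' : b' ∈ D) (hab' : b' - a' ≤ ε) (hne : (Ico a b ∩ Ico a' b').Nonempty) :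
    Ico a b ∩ Ico a' b' ∈ smallIco D ε := by
  rw [Ico_inter_Ico] at hne ⊢
  refine ⟨_, ?_, _, ?_, nonempty_Ico.1 hne, ?_, rfl⟩
  · rcases max_choice a a' with h | h <;> rw [h] <;> assumption
  · rcases min_choice b b' with h | h <;> rw [h] <;> assumption
  · linarith [min_le_right b b', le_max_right a a']

theorem isPiSystem_smallIco : IsPiSystem (smallIco D ε) := by
  rintro _ ⟨a, ha, b, hb, -, -, rfl⟩ _ ⟨a', ha', b', hb', -, hab', rfl⟩ hne
  exact Ico_inter_Ico_mem_smallIco ha hb ha' hb' hab' hne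

theorem exists_iUnion_smallIco_eq_univ (hD : Dᶜ.Countable) (hε : 0 < ε) :
    ∃ s : ℕ → Set ℝ, (∀ n, s n ∈ smallIco D ε) ∧ ⋃ n, s n = univ := by
  -- a translate of the lattice `ε ℤ` avoiding the countable set `Dᶜ`
  obtain ⟨θ, hθ⟩ : ∃ θ : ℝ, ∀ k : ℤ, θ + k • ε ∈ D := by
    obtain ⟨θ, hθ⟩ :=
      ((countable_iUnion fun k : ℤ => hD.image (· - k • ε)).dense_compl ℝ).nonempty
    exact ⟨θ, fun k => by_contra fun hk => hθ (mem_iUnion.2 ⟨k, _, hk, add_sub_cancel_right θ _⟩)⟩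
  let e := Equiv.intEquivNat.symm
  refine ⟨fun n => Ico (θ + e n • ε) (θ + (e n + 1) • ε),
    fun n => ⟨_, hθ _, _, hθ _, by simp [add_smul, hε], by simp [add_smul], rfl⟩, ?_⟩
  rw [e.surjective.iUnion_comp fun k => Ico (θ + k • ε) (θ + (k + 1) • ε)]
  exact iUnion_Ico_add_zsmul hε θ

theorem generateFrom_smallIco (hD : Dᶜ.Countable) (hε : 0 < ε) :
    MeasurableSpace.generateFrom (smallIco D ε) = (inferInstance : MeasurableSpace ℝ) := by
  refine le_antisymm (MeasurableSpace.generateFrom_le ?_) ?_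
  · rintro _ ⟨a, -, b, -, -, -, rfl⟩
    exact measurableSet_Ico
  have hdense : Dense D := by simpa using hD.dense_compl ℝ
  rw [BorelSpace.measurable_eq (α := ℝ), hdense.borel_eq_generateFrom_Ico_mem]
  refine MeasurableSpace.generateFrom_le ?_
  rintro _ ⟨a, ha, b, hb, -, rfl⟩
  obtain ⟨s, hs, hcover⟩ := exists_iUnion_smallIco_eq_univ hD hε
  rw [← inter_univ (Ico a b), ← hcover, inter_iUnion]
  refine MeasurableSet.iUnion fun n => ?_
  obtain ⟨a', ha', b', hb', -, hab', hn⟩ := hs n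
  rw [← hn]
  rcases (Ico a b ∩ Ico a' b').eq_empty_or_nonempty with h | h
  · rw [h]
    exact MeasurableSpace.measurableSet_empty _
  · exact MeasurableSpace.measurableSet_generateFrom
      (Ico_inter_Ico_mem_smallIco ha hb ha' hb' hab' h)

theorem prod_eq_of_smallIco {ν₁ ν₂ : Measure ℝ} [IsFiniteMeasure ν₁] [IsFiniteMeasure ν₂]
    {ρ : Measure (ℝ × ℝ)} (hD : Dᶜ.Countable) (hε : 0 < ε)
    (h : ∀ s ∈ smallIco D ε, ∀ t ∈ smallIco D ε, ρ (s ×ˢ t) = ν₁ s * ν₂ t) :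
    ν₁.prod ν₂ = ρ := by
  obtain ⟨s, hs, hcover⟩ := exists_iUnion_smallIco_eq_univ hD hε
  have spanning (ν : Measure ℝ) [IsFiniteMeasure ν] : ν.FiniteSpanningSetsIn (smallIco D ε) :=
    ⟨s, hs, fun _ => measure_lt_top ν _, hcover⟩
  have hgen := generateFrom_smallIco hD hε
  exact Measure.prod_eq_generateFrom hgen hgen isPiSystem_smallIco isPiSystem_smallIco
    (spanning ν₁) (spanning ν₂) h

theorem measurableSet_of_mem_smallIco {s : Set ℝ} (hs : s ∈ smallIco D ε) : MeasurableSet s := by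
  obtain ⟨a, -, b, -, -, -, rfl⟩ := hs
  exact measurableSet_Ico

theorem eq_fst_prod_snd_of_mul_eq {μ : Measure (ℝ × ℝ)} [IsProbabilityMeasure μ]
    (hD : Dᶜ.Countable) (hε : 0 < ε)
    (h : ∀ s ∈ smallIco D ε, ∀ t ∈ smallIco D ε, ∀ s' ∈ smallIco D ε, ∀ t' ∈ smallIco D ε,
      μ (s ×ˢ t) * μ (s' ×ˢ t') = μ (s ×ˢ t') * μ (s' ×ˢ t)) :
    μ = μ.fst.prod μ.snd := by
  refine (prod_eq_of_smallIco hD hε fun s hs t ht => ?_).symm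
  have fst_apply {s' : Set ℝ} (hs' : MeasurableSet s') :
      (μ.restrict (univ ×ˢ t)).fst s' = μ (s' ×ˢ t) := by
    rw [Measure.fst_apply hs', Measure.restrict_apply (measurable_fst hs')]
    congr 1
    ext
    simp
  have snd_apply {t' : Set ℝ} (ht' : MeasurableSet t') :
      (μ.restrict (s ×ˢ univ)).snd t' = μ (s ×ˢ t') := by
    rw [Measure.snd_apply ht', Measure.restrict_apply (measurable_snd ht')]
    congr 1
    ext
    simp [and_comm]
  -- `s' ↦ μ (s' ×ˢ t)` and `t' ↦ μ (s ×ˢ t')` have product `μ (s ×ˢ t) • μ`; compare total masses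
  have key : (μ.restrict (univ ×ˢ t)).fst.prod (μ.restrict (s ×ˢ univ)).snd = μ (s ×ˢ t) • μ :=
    prod_eq_of_smallIco hD hε fun s' hs' t' ht' => by
      rw [Measure.smul_apply, smul_eq_mul, h s hs t ht s' hs' t' ht', mul_comm,
        fst_apply (measurableSet_of_mem_smallIco hs'),
        snd_apply (measurableSet_of_mem_smallIco ht')]
  have total := congrArg (fun ν : Measure (ℝ × ℝ) => ν univ) key
  simp only [← univ_prod_univ, Measure.prod_prod, Measure.smul_apply, smul_eq_mul] at total
  rw [fst_apply MeasurableSet.univ, snd_apply MeasurableSet.univ, univ_prod_univ, measure_univ,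
    mul_one, univ_prod, prod_univ, ← Measure.fst_apply (measurableSet_of_mem_smallIco hs),
    ← Measure.snd_apply (measurableSet_of_mem_smallIco ht)] at total
  rw [← total, mul_comm]

end SmallIntervals

section Plane

variable {μ : Measure (ℝ × ℝ)}

def nonAtoms (μ : Measure (ℝ × ℝ)) : Set ℝ := {t | μ.fst {t} = 0 ∧ μ.snd {t} = 0}

theorem countable_compl_nonAtoms [IsFiniteMeasure μ] : (nonAtoms μ)ᶜ.Countable := by
  have atoms (ν : Measure ℝ) [IsFiniteMeasure ν] : {t | ν {t} ≠ 0}.Countable := by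
    simpa [pos_iff_ne_zero] using Measure.countable_meas_level_set_pos (μ := ν) measurable_id
  refine ((atoms μ.fst).union (atoms μ.snd)).mono fun t ht => ?_
  simp only [nonAtoms, mem_compl_iff, mem_ofPred_eq, not_and_or] at ht
  exact ht

theorem dense_nonAtoms [IsFiniteMeasure μ] : Dense (nonAtoms μ) := by
  simpa using (countable_compl_nonAtoms (μ := μ)).dense_compl ℝ

theorem Ico_prod_Ico_ae_eq {a b c d : ℝ} (hb : μ.fst {b} = 0) (hd : μ.snd {d} = 0) :
    Ico a b ×ˢ Ico c d =ᵐ[μ] Icc a b ×ˢ Icc c d :=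
  ((measurable_fst.measurePreserving μ).quasiMeasurePreserving.preimage_ae_eq
    (Ico_ae_eq_Icc' hb)).inter
  ((measurable_snd.measurePreserving μ).quasiMeasurePreserving.preimage_ae_eq (Ico_ae_eq_Icc' hd))

-- Half-open rectangles whose right and top edges carry no mass, so that they agree a.e. with the
-- closed rectangles of the statement and split additively.
def LocallyUncorrelated (μ : Measure (ℝ × ℝ)) (ε : ℝ) : Prop :=
  ∀ a b c d, b ∈ nonAtoms μ → d ∈ nonAtoms μ → b - a ≤ ε → d - c ≤ ε →
    0 < μ (Ico a b ×ˢ Ico c d) → UncorrelatedOn μ Prod.fst Prod.snd (Ico a b ×ˢ Ico c d)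

theorem locallyUncorrelated_of_cexp [IsFiniteMeasure μ] {ε : ℝ}
    (h : ∀ a b c d : ℝ, max (b - a) (d - c) ≤ ε → 0 < μ (Icc a b ×ˢ Icc c d) →
      cexp μ (Icc a b ×ˢ Icc c d) (fun z => z.1 * z.2)
        = cexp μ (Icc a b ×ˢ Icc c d) Prod.fst * cexp μ (Icc a b ×ˢ Icc c d) Prod.snd) :
    LocallyUncorrelated μ ε := by
  intro a b c d hb hd hab hcd hpos
  have hae := Ico_prod_Ico_ae_eq (a := a) (c := c) hb.1 hd.2
  rw [uncorrelatedOn_iff_cexp hpos.ne' (measure_ne_top μ _), cexp_congr_set hae,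
    cexp_congr_set hae, cexp_congr_set hae]
  exact h a b c d (max_le hab hcd) (measure_congr hae ▸ hpos)

theorem integrableOn_Ico_prod_Ico [IsFiniteMeasure μ] {f : ℝ × ℝ → ℝ} (hf : Continuous f)
    (a b c d : ℝ) : IntegrableOn f (Ico a b ×ˢ Ico c d) μ :=
  (hf.continuousOn.integrableOn_compact (isCompact_Icc.prod isCompact_Icc)).mono_set
    (prod_mono Ico_subset_Icc_self Ico_subset_Icc_self)

theorem measureReal_Ico_prod_add [IsFiniteMeasure μ] {p q r : ℝ} (hpq : p ≤ q) (hqr : q ≤ r)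
    {t : Set ℝ} (ht : MeasurableSet t) :
    μ.real (Ico p r ×ˢ t) = μ.real (Ico p q ×ˢ t) + μ.real (Ico q r ×ˢ t) := by
  rw [← Ico_union_Ico_eq_Ico hpq hqr, union_prod,
    measureReal_union (disjoint_prod.2 (Or.inl Ico_disjoint_Ico_same)) (measurableSet_Ico.prod ht)]

theorem measureReal_prod_Ico_add [IsFiniteMeasure μ] {p q r : ℝ} (hpq : p ≤ q) (hqr : q ≤ r)
    {s : Set ℝ} (hs : MeasurableSet s) :
    μ.real (s ×ˢ Ico p r) = μ.real (s ×ˢ Ico p q) + μ.real (s ×ˢ Ico q r) := by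
  rw [← Ico_union_Ico_eq_Ico hpq hqr, prod_union,
    measureReal_union (disjoint_prod.2 (Or.inr Ico_disjoint_Ico_same)) (hs.prod measurableSet_Ico)]

theorem setIntegral_Ico_prod_add {p q r : ℝ} (hpq : p ≤ q) (hqr : q ≤ r) {t : Set ℝ}
    (ht : MeasurableSet t) {f : ℝ × ℝ → ℝ} (hf : IntegrableOn f (Ico p r ×ˢ t) μ) :
    ∫ z in Ico p r ×ˢ t, f z ∂μ = (∫ z in Ico p q ×ˢ t, f z ∂μ) + ∫ z in Ico q r ×ˢ t, f z ∂μ := by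
  rw [← Ico_union_Ico_eq_Ico hpq hqr, union_prod] at hf ⊢
  exact setIntegral_union (disjoint_prod.2 (Or.inl Ico_disjoint_Ico_same))
    (measurableSet_Ico.prod ht) hf.left_of_union hf.right_of_union

theorem measure_Ico_prod_Ico_pos (hprod : μ.fst.support ×ˢ μ.snd.support ⊆ μ.support)
    {a b c d : ℝ} (hx : (Ioo a b ∩ μ.fst.support).Nonempty)
    (hy : (Ioo c d ∩ μ.snd.support).Nonempty) : 0 < μ (Ico a b ×ˢ Ico c d) := by
  obtain ⟨x, hxI, hx⟩ := hx
  obtain ⟨y, hyI, hy⟩ := hy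
  refine ((Measure.mem_support_iff_forall _).1 (hprod ⟨hx, hy⟩) _
    (prod_mem_nhds (Ioo_mem_nhds hxI.1 hxI.2) (Ioo_mem_nhds hyI.1 hyI.2))).trans_le ?_
  exact measure_mono (prod_mono Ioo_subset_Ico_self Ioo_subset_Ico_self)

theorem measure_Ico_eq_zero_of_inter_support {ν : Measure ℝ} {a b : ℝ} (ha : ν {a} = 0)
    (h : Ioo a b ∩ ν.support = ∅) : ν (Ico a b) = 0 := by
  refine measure_mono_null (fun x hx => ?_) (measure_union_null ha ν.measure_compl_support)
  rcases hx.1.eq_or_lt with rfl | hax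
  · exact Or.inl rfl
  · exact Or.inr fun hs => (eq_empty_iff_forall_notMem.1 h) x ⟨⟨hax, hx.2⟩, hs⟩

theorem measure_Ico_prod_eq_zero {a b : ℝ} (ha : μ.fst {a} = 0)
    (h : Ioo a b ∩ μ.fst.support = ∅) (t : Set ℝ) : μ (Ico a b ×ˢ t) = 0 :=
  measure_mono_null (fun _ hz => hz.1)
    ((Measure.fst_apply measurableSet_Ico).symm.trans (measure_Ico_eq_zero_of_inter_support ha h))

theorem measure_prod_Ico_eq_zero {c d : ℝ} (hc : μ.snd {c} = 0)
    (h : Ioo c d ∩ μ.snd.support = ∅) (s : Set ℝ) : μ (s ×ˢ Ico c d) = 0 :=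
  measure_mono_null (fun _ hz => hz.2)
    ((Measure.snd_apply measurableSet_Ico).symm.trans (measure_Ico_eq_zero_of_inter_support hc h))

end Plane

section LocalToGlobal

variable {μ : Measure (ℝ × ℝ)} [IsFiniteMeasure μ] {ε : ℝ}

theorem integral_fst_mul_measureReal_eq (hU : LocallyUncorrelated μ ε) {a b c s d : ℝ}
    (hb : b ∈ nonAtoms μ) (hs : s ∈ nonAtoms μ) (hd : d ∈ nonAtoms μ) (hab : b - a ≤ ε)
    (hcd : d - c ≤ ε) (hcs : c ≤ s) (hsd : s ≤ d) (h₁ : 0 < μ (Ico a b ×ˢ Ico c s))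
    (h₂ : 0 < μ (Ico a b ×ˢ Ico s d)) :
    (∫ z in Ico a b ×ˢ Ico c s, z.1 ∂μ) * μ.real (Ico a b ×ˢ Ico s d)
      = (∫ z in Ico a b ×ˢ Ico s d, z.1 ∂μ) * μ.real (Ico a b ×ˢ Ico c s) := by
  have hunion : Ico a b ×ˢ Ico c s ∪ Ico a b ×ˢ Ico s d = Ico a b ×ˢ Ico c d := by
    rw [← prod_union, Ico_union_Ico_eq_Ico hcs hsd]
  have hint {f : ℝ × ℝ → ℝ} (hf : Continuous f) :
      IntegrableOn f (Ico a b ×ˢ Ico c s ∪ Ico a b ×ˢ Ico s d) μ := by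
    rw [hunion]
    exact integrableOn_Ico_prod_Ico hf a b c d
  have hU_union : UncorrelatedOn μ Prod.fst Prod.snd (Ico a b ×ˢ Ico c s ∪ Ico a b ×ˢ Ico s d) := by
    rw [hunion]
    exact hU a b c d hb hd hab hcd (h₁.trans_le (measure_mono (hunion ▸ subset_union_left)))
  exact integral_mul_measureReal_eq_of_uncorrelatedOn (measurableSet_Ico.prod measurableSet_Ico)
    (measurableSet_Ico.prod measurableSet_Ico) (disjoint_prod.2 (Or.inr Ico_disjoint_Ico_same))
    (hint continuous_fst) (hint continuous_snd) (hint (continuous_fst.mul continuous_snd)) h₁ h₂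
    (c := s) (fun z hz => hz.2.2) (fun z hz => hz.2.1)
    (hU a b c s hb hs hab (by linarith) h₁) (hU a b s d hb hd hab (by linarith) h₂) hU_union

theorem measureReal_mul_eq_of_locallyUncorrelated (hU : LocallyUncorrelated μ ε)
    {a t b c s d : ℝ} (ht : t ∈ nonAtoms μ) (hb : b ∈ nonAtoms μ) (hs : s ∈ nonAtoms μ)
    (hd : d ∈ nonAtoms μ) (hab : b - a ≤ ε) (hcd : d - c ≤ ε) (hat : a ≤ t) (htb : t ≤ b)
    (hcs : c ≤ s) (hsd : s ≤ d)
    (h₁₁ : 0 < μ (Ico a t ×ˢ Ico c s)) (h₁₂ : 0 < μ (Ico a t ×ˢ Ico s d))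
    (h₂₁ : 0 < μ (Ico t b ×ˢ Ico c s)) (h₂₂ : 0 < μ (Ico t b ×ˢ Ico s d)) :
    μ.real (Ico a t ×ˢ Ico c s) * μ.real (Ico t b ×ˢ Ico s d)
      = μ.real (Ico t b ×ˢ Ico c s) * μ.real (Ico a t ×ˢ Ico s d) := by
  have e₁ := integral_fst_mul_measureReal_eq hU ht hs hd (by linarith) hcd hcs hsd h₁₁ h₁₂
  have e₂ := integral_fst_mul_measureReal_eq hU hb hs hd (by linarith) hcd hcs hsd h₂₁ h₂₂
  have widen : Ico a t ⊆ Ico a b := Ico_subset_Ico_right htb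
  have e := integral_fst_mul_measureReal_eq hU hb hs hd hab hcd hcs hsd
    (h₁₁.trans_le (measure_mono (prod_mono widen subset_rfl)))
    (h₁₂.trans_le (measure_mono (prod_mono widen subset_rfl)))
  rw [setIntegral_Ico_prod_add hat htb measurableSet_Ico
      (integrableOn_Ico_prod_Ico continuous_fst _ _ _ _),
    setIntegral_Ico_prod_add hat htb measurableSet_Ico
      (integrableOn_Ico_prod_Ico continuous_fst _ _ _ _),
    measureReal_Ico_prod_add hat htb measurableSet_Ico,
    measureReal_Ico_prod_add hat htb measurableSet_Ico] at e
  have hS₁₁ := setIntegral_lt_mul_measureReal (measurableSet_Ico.prod measurableSet_Ico)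
    (measure_ne_top μ _) h₁₁ (integrableOn_Ico_prod_Ico continuous_fst _ _ _ _) (c := t)
    fun z hz => hz.1.2
  have hS₂₁ := setIntegral_ge_of_const_le_real (measurableSet_Ico.prod measurableSet_Ico)
    (measure_ne_top μ _) (c := t) (fun z hz => hz.1.1)
    (integrableOn_Ico_prod_Ico (μ := μ) continuous_fst t b c s)
  have hm₁₁ : 0 < μ.real (Ico a t ×ˢ Ico c s) := ENNReal.toReal_pos h₁₁.ne' (measure_ne_top μ _)
  have hm₂₁ : 0 < μ.real (Ico t b ×ˢ Ico c s) := ENNReal.toReal_pos h₂₁.ne' (measure_ne_top μ _)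
  set m₁₁ := μ.real (Ico a t ×ˢ Ico c s)
  set m₁₂ := μ.real (Ico a t ×ˢ Ico s d)
  set m₂₁ := μ.real (Ico t b ×ˢ Ico c s)
  set m₂₂ := μ.real (Ico t b ×ˢ Ico s d)
  set S₁₁ := ∫ z in Ico a t ×ˢ Ico c s, z.1 ∂μ
  set S₂₁ := ∫ z in Ico t b ×ˢ Ico c s, z.1 ∂μ
  -- the mean of `x` is the same `α < t` on both cells of the left column and the same `β ≥ t`
  -- on the right one; equal means on the two full rows then force `m₁₁ / m₁₂ = m₂₁ / m₂₂`
  have hsplit : (S₁₁ * m₂₁ - S₂₁ * m₁₁) * (m₁₁ * m₂₂ - m₁₂ * m₂₁) = 0 := by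
    linear_combination m₁₁ * m₂₁ * e - (m₁₁ * m₂₁ + m₂₁ ^ 2) * e₁ - (m₁₁ * m₂₁ + m₁₁ ^ 2) * e₂
  have hS : S₁₁ * m₂₁ - S₂₁ * m₁₁ < 0 := by nlinarith
  linarith [(mul_eq_zero.1 hsplit).resolve_left hS.ne]

theorem measureReal_mul_eq_of_rows (hX : μ.fst.support.OrdConnected)
    (hprod : μ.fst.support ×ˢ μ.snd.support ⊆ μ.support) (hε : 0 < ε)
    (hU : LocallyUncorrelated μ ε) {c s d : ℝ} (hs : s ∈ nonAtoms μ) (hd : d ∈ nonAtoms μ)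
    (hcd : d - c ≤ ε) (hcs : (Ioo c s ∩ μ.snd.support).Nonempty)
    (hsd : (Ioo s d ∩ μ.snd.support).Nonempty) {a b a' b' : ℝ} (ha : a ∈ nonAtoms μ)
    (hb : b ∈ nonAtoms μ) (ha' : a' ∈ nonAtoms μ) (hb' : b' ∈ nonAtoms μ) (hab : b - a ≤ ε)
    (hab' : b' - a' ≤ ε) (hI : (Ioo a b ∩ μ.fst.support).Nonempty)
    (hI' : (Ioo a' b' ∩ μ.fst.support).Nonempty) :
    μ.real (Ico a b ×ˢ Ico c s) * μ.real (Ico a' b' ×ˢ Ico s d)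
      = μ.real (Ico a' b' ×ˢ Ico c s) * μ.real (Ico a b ×ˢ Ico s d) := by
  have hlt {p q : ℝ} {J : Set ℝ} (h : (Ioo p q ∩ J).Nonempty) : p < q :=
    nonempty_Ioo.1 (h.mono inter_subset_left)
  refine mul_eq_mul_of_link (F := fun p q => μ.real (Ico p q ×ˢ Ico c s))
    (G := fun p q => μ.real (Ico p q ×ˢ Ico s d)) hX dense_nonAtoms hε
    (fun p q r hpq hqr => measureReal_Ico_prod_add hpq hqr measurableSet_Ico)
    (fun p q r hpq hqr => measureReal_Ico_prod_add hpq hqr measurableSet_Ico)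
    (fun p q hpq => ENNReal.toReal_pos (measure_Ico_prod_Ico_pos hprod hpq hsd).ne'
      (measure_ne_top μ _))
    (fun p hp q h => ?_) (fun p _ q hq r hr hpr hpq hqr => ?_) ha hb ha' hb' hab hab' hI hI'
  · simp [measureReal_def, measure_Ico_prod_eq_zero hp.1 h]
  · exact measureReal_mul_eq_of_locallyUncorrelated hU hq hr hs hd hpr hcd (hlt hpq).le
      (hlt hqr).le (hlt hcs).le (hlt hsd).le (measure_Ico_prod_Ico_pos hprod hpq hcs)
      (measure_Ico_prod_Ico_pos hprod hpq hsd) (measure_Ico_prod_Ico_pos hprod hqr hcs)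
      (measure_Ico_prod_Ico_pos hprod hqr hsd)

theorem measureReal_mul_eq_of_cols (hX : μ.fst.support.OrdConnected)
    (hY : μ.snd.support.OrdConnected) (hprod : μ.fst.support ×ˢ μ.snd.support ⊆ μ.support)
    (hε : 0 < ε) (hU : LocallyUncorrelated μ ε) {a b a' b' : ℝ} (ha : a ∈ nonAtoms μ)
    (hb : b ∈ nonAtoms μ) (ha' : a' ∈ nonAtoms μ) (hb' : b' ∈ nonAtoms μ) (hab : b - a ≤ ε)
    (hab' : b' - a' ≤ ε) (hI : (Ioo a b ∩ μ.fst.support).Nonempty)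
    (hI' : (Ioo a' b' ∩ μ.fst.support).Nonempty) {c d c' d' : ℝ} (hc : c ∈ nonAtoms μ)
    (hd : d ∈ nonAtoms μ) (hc' : c' ∈ nonAtoms μ) (hd' : d' ∈ nonAtoms μ) (hcd : d - c ≤ ε)
    (hcd' : d' - c' ≤ ε) (hJ : (Ioo c d ∩ μ.snd.support).Nonempty)
    (hJ' : (Ioo c' d' ∩ μ.snd.support).Nonempty) :
    μ.real (Ico a b ×ˢ Ico c d) * μ.real (Ico a' b' ×ˢ Ico c' d')
      = μ.real (Ico a b ×ˢ Ico c' d') * μ.real (Ico a' b' ×ˢ Ico c d) := by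
  refine mul_eq_mul_of_link (F := fun c d => μ.real (Ico a b ×ˢ Ico c d))
    (G := fun c d => μ.real (Ico a' b' ×ˢ Ico c d)) hY dense_nonAtoms hε
    (fun p q r hpq hqr => measureReal_prod_Ico_add hpq hqr measurableSet_Ico)
    (fun p q r hpq hqr => measureReal_prod_Ico_add hpq hqr measurableSet_Ico)
    (fun p q hpq => ENNReal.toReal_pos (measure_Ico_prod_Ico_pos hprod hI' hpq).ne'
      (measure_ne_top μ _))
    (fun p hp q h => ?_) (fun p _ q hq r hr hpr hpq hqr => ?_) hc hd hc' hd' hcd hcd' hJ hJ'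
  · simp [measureReal_def, measure_prod_Ico_eq_zero hp.2 h]
  · exact (measureReal_mul_eq_of_rows hX hprod hε hU hq hr hpr hpq hqr ha hb ha' hb' hab hab'
      hI hI').trans (mul_comm _ _)

theorem measure_mul_eq_of_smallIco (hX : μ.fst.support.OrdConnected)
    (hY : μ.snd.support.OrdConnected) (hprod : μ.fst.support ×ˢ μ.snd.support ⊆ μ.support)
    (hε : 0 < ε) (hU : LocallyUncorrelated μ ε) {s t s' t' : Set ℝ}
    (hs : s ∈ smallIco (nonAtoms μ) ε) (ht : t ∈ smallIco (nonAtoms μ) ε)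
    (hs' : s' ∈ smallIco (nonAtoms μ) ε) (ht' : t' ∈ smallIco (nonAtoms μ) ε) :
    μ (s ×ˢ t) * μ (s' ×ˢ t') = μ (s ×ˢ t') * μ (s' ×ˢ t) := by
  obtain ⟨a, ha, b, hb, -, hab, rfl⟩ := hs
  obtain ⟨c, hc, d, hd, -, hcd, rfl⟩ := ht
  obtain ⟨a', ha', b', hb', -, hab', rfl⟩ := hs'
  obtain ⟨c', hc', d', hd', -, hcd', rfl⟩ := ht'
  by_cases hI : (Ioo a b ∩ μ.fst.support).Nonempty
  swap; · simp [measure_Ico_prod_eq_zero ha.1 (not_nonempty_iff_eq_empty.1 hI)]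
  by_cases hI' : (Ioo a' b' ∩ μ.fst.support).Nonempty
  swap; · simp [measure_Ico_prod_eq_zero ha'.1 (not_nonempty_iff_eq_empty.1 hI')]
  by_cases hJ : (Ioo c d ∩ μ.snd.support).Nonempty
  swap; · simp [measure_prod_Ico_eq_zero hc.2 (not_nonempty_iff_eq_empty.1 hJ)]
  by_cases hJ' : (Ioo c' d' ∩ μ.snd.support).Nonempty
  swap; · simp [measure_prod_Ico_eq_zero hc'.2 (not_nonempty_iff_eq_empty.1 hJ')]
  rw [← ENNReal.toReal_eq_toReal_iff' (by finiteness) (by finiteness), ENNReal.toReal_mul,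
    ENNReal.toReal_mul]
  exact measureReal_mul_eq_of_cols hX hY hprod hε hU ha hb ha' hb' hab hab' hI hI' hc hd hc' hd'
    hcd hcd' hJ hJ'

end LocalToGlobal

theorem eq_fst_prod_snd_iff {μ : Measure (ℝ × ℝ)} [IsProbabilityMeasure μ]
    (hX : μ.fst.support.OrdConnected) (hY : μ.snd.support.OrdConnected)
    (hprod : μ.fst.support ×ˢ μ.snd.support ⊆ μ.support) :
    μ = μ.fst.prod μ.snd ↔ ∃ ε > (0 : ℝ), ∀ a b c d : ℝ, max (b - a) (d - c) ≤ ε →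
      0 < μ (Icc a b ×ˢ Icc c d) →
      cexp μ (Icc a b ×ˢ Icc c d) (fun z => z.1 * z.2)
        = cexp μ (Icc a b ×ˢ Icc c d) Prod.fst * cexp μ (Icc a b ×ˢ Icc c d) Prod.snd := by
  constructor
  · intro h
    refine ⟨1, one_pos, fun a b c d _ hpos => ?_⟩
    rw [h] at hpos ⊢
    exact cexp_prod_mul hpos.ne' id id
  · rintro ⟨ε, hε, hloc⟩
    exact eq_fst_prod_snd_of_mul_eq countable_compl_nonAtoms hε fun s hs t ht s' hs' t' ht' =>
      measure_mul_eq_of_smallIco hX hY hprod hε (locallyUncorrelated_of_cexp hloc) hs ht hs' ht'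

theorem stmt_11 {Ω : Type*} [MeasurableSpace Ω] (P : Measure Ω) [IsProbabilityMeasure P]
    (X Y : Ω → ℝ) (hX : Measurable X) (hY : Measurable Y)
    -- the supports of `X` and `Y` are intervals:
    (hsX : (msupport (Measure.map X P)).OrdConnected)
    (hsY : (msupport (Measure.map Y P)).OrdConnected)
    -- the support of the joint distribution is the product of the marginal supports:
    (hprod : msupport (Measure.map (fun ω => (X ω, Y ω)) P)
      = msupport (Measure.map X P) ×ˢ msupport (Measure.map Y P)) :
    Measure.map (fun ω => (X ω, Y ω)) P = (Measure.map X P).prod (Measure.map Y P) ↔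
    ∃ ε > (0 : ℝ), ∀ a b c d : ℝ, max (b - a) (d - c) ≤ ε →
      0 < P {ω | X ω ∈ Icc a b ∧ Y ω ∈ Icc c d} →
      cexp P {ω | X ω ∈ Icc a b ∧ Y ω ∈ Icc c d} (fun ω => X ω * Y ω)
        = cexp P {ω | X ω ∈ Icc a b ∧ Y ω ∈ Icc c d} X
          * cexp P {ω | X ω ∈ Icc a b ∧ Y ω ∈ Icc c d} Y := by
  have hφ : Measurable fun ω => (X ω, Y ω) := hX.prodMk hY
  have := Measure.isProbabilityMeasure_map (μ := P) hφ.aemeasurable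
  have hμX : (P.map fun ω => (X ω, Y ω)).fst = P.map X := Measure.fst_map_prodMk hY
  have hμY : (P.map fun ω => (X ω, Y ω)).snd = P.map Y := Measure.snd_map_prodMk hX
  simp only [msupport_eq_support, ← hμX, ← hμY] at hsX hsY hprod
  rw [← hμX, ← hμY, eq_fst_prod_snd_iff hsX hsY hprod.ge]
  refine exists_congr fun ε => and_congr_right fun _ => forall₄_congr fun a b c d => ?_
  have hR : MeasurableSet (Icc a b ×ˢ Icc c d) := measurableSet_Icc.prod measurableSet_Icc
  rw [Measure.map_apply hφ hR, cexp_map hφ hR (f := fun z : ℝ × ℝ => z.1 * z.2) (by fun_prop),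
    cexp_map hφ hR measurable_fst, cexp_map hφ hR measurable_snd]
  rfl
end
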